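/- arXiv:2007.00123 — 13 statements merged into one kernel-verified Lean document; each statement's English description precedes it below -/
import Mathlib

section
/- Let p be a prime and let n, k be positive integers such that n is odd and k divides n^p − 1. For every prime ℓ dividing k, write α = ν_ℓ(k), β = ν_ℓ(gcd(n−1, k)) and γ = ν_ℓ(gcd(n^(p−1) + n^(p−2) + ⋯ + n + 1, k)). Then: (a) if ℓ ≠ p, then either (β = 0 and γ = α) or (β = α and γ = 0); (b) if ℓ = p and α = 1, then β = 1 and γ = 1; (c) if ℓ = p = 2 and α = 2, then either (β = 1 and γ = 2) or (β = 2 and γ = 1); (d) if ℓ = p = 2 and α > 2, then either (β = 1 and γ ∈ {α−1, α}) or (γ = 1 and β ∈ {α−1, α}); (e) if ℓ = p > 2 and α ≥ 2, then β ∈ {α−1, α} and γ = 1. -/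
/-!
Write `n ^ p - 1 = (n - 1) * S` with `S = 1 + n + ⋯ + n ^ (p - 1)`. Since `S ≡ p [MOD n - 1]`,
`gcd (n - 1) S` divides `p`; so with `a = ν_ℓ(n - 1)` and `b = ν_ℓ(S)` we have `min a b = 0` for
`ℓ ≠ p`, while for `ℓ = p` Fermat's little theorem makes `p` divide both factors and `min a b = 1`.
Moreover `α ≤ a + b`, `β = min a α` and `γ = min b α`. For odd `p`, lifting the exponent gives
`b = 1`; for `p = 2`, `8 ∣ n ^ 2 - 1` gives `a + b ≥ 3`. The rest is arithmetic.
-/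

open Finset

namespace Nat

lemma sub_one_mul_geom_sum {n : ℕ} (hn : 1 ≤ n) (p : ℕ) :
    (n - 1) * ∑ i ∈ range p, n ^ i = n ^ p - 1 := by
  rw [mul_comm, geom_sum_mul_of_one_le hn]

lemma geom_sum_modEq_sub_one {n : ℕ} (hn : 1 ≤ n) (p : ℕ) :
    ∑ i ∈ range p, n ^ i ≡ p [MOD n - 1] := by
  simpa using Nat.ModEq.sum (s := range p) fun i _ => (Nat.modEq_sub hn).pow i

lemma gcd_sub_one_geom_sum_dvd {n : ℕ} (hn : 1 ≤ n) (p : ℕ) :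
    gcd (n - 1) (∑ i ∈ range p, n ^ i) ∣ p :=
  ((geom_sum_modEq_sub_one hn p).dvd_iff (gcd_dvd_left _ _)).mp (gcd_dvd_right _ _)

lemma Prime.dvd_sub_one_of_dvd_pow_self_sub_one {p n : ℕ} (hp : p.Prime) (h : p ∣ n ^ p - 1) :
    p ∣ n - 1 := by
  rcases Nat.eq_zero_or_pos n with rfl | hn
  · simp
  have := Fact.mk hp
  have h1 : 1 ≡ n ^ p [MOD p] := (modEq_iff_dvd' (one_le_pow _ _ hn)).mpr h
  rw [← ZMod.natCast_eq_natCast_iff, Nat.cast_pow, ZMod.pow_card] at h1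
  exact (modEq_iff_dvd' hn).mp ((ZMod.natCast_eq_natCast_iff _ _ _).mp (by simpa using h1))

end Nat

section padicValNat

variable {ℓ : ℕ} [hℓ : Fact ℓ.Prime]

lemma padicValNat_gcd {x y : ℕ} (hx : x ≠ 0) (hy : y ≠ 0) :
    padicValNat ℓ (x.gcd y) = min (padicValNat ℓ x) (padicValNat ℓ y) := by
  simp only [← Nat.factorization_def _ hℓ.out, Nat.factorization_gcd hx hy, Finsupp.inf_apply]

lemma padicValNat_le_of_dvd {x y : ℕ} (hy : y ≠ 0) (h : x ∣ y) :
    padicValNat ℓ x ≤ padicValNat ℓ y :=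
  (padicValNat_dvd_iff_le hy).mp (pow_padicValNat_dvd.trans h)

lemma padicValNat_gcd_prime_of_dvd {p k : ℕ} (hp : p.Prime) (hℓk : ℓ ∣ k) :
    padicValNat ℓ (p.gcd k) = padicValNat ℓ p := by
  rcases eq_or_ne ℓ p with rfl | hℓp
  · rw [Nat.gcd_eq_left hℓk]
  · have := Fact.mk hp
    have := padicValNat_le_of_dvd (ℓ := ℓ) hp.ne_zero (Nat.gcd_dvd_left p k)
    rw [padicValNat_primes hℓp] at this ⊢
    omega

lemma padicValNat_pow_sub_one {n p : ℕ} (hn : 1 < n) (hp : p ≠ 0) :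
    padicValNat ℓ (n ^ p - 1) =
      padicValNat ℓ (n - 1) + padicValNat ℓ (∑ i ∈ range p, n ^ i) := by
  rw [← Nat.sub_one_mul_geom_sum hn.le,
    padicValNat.mul (by omega) (geom_sum_pos n.zero_le hp).ne']

lemma min_padicValNat_sub_one_geom_sum_le {n p : ℕ} (hn : 1 < n) (hp : p ≠ 0) :
    min (padicValNat ℓ (n - 1)) (padicValNat ℓ (∑ i ∈ range p, n ^ i)) ≤ padicValNat ℓ p := by
  rw [← padicValNat_gcd (by omega) (geom_sum_pos n.zero_le hp).ne']
  exact padicValNat_le_of_dvd hp (Nat.gcd_sub_one_geom_sum_dvd hn.le p)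

lemma min_padicValNat_sub_one_geom_sum_eq_zero {n p : ℕ} (hn : 1 < n) (hp : p.Prime)
    (hℓp : ℓ ≠ p) :
    min (padicValNat ℓ (n - 1)) (padicValNat ℓ (∑ i ∈ range p, n ^ i)) = 0 := by
  have := Fact.mk hp
  simpa [padicValNat_primes hℓp] using min_padicValNat_sub_one_geom_sum_le (ℓ := ℓ) hn hp.ne_zero

lemma min_padicValNat_sub_one_geom_sum_self {n : ℕ} (hn : 1 < n) (h : ℓ ∣ n ^ ℓ - 1) :
    min (padicValNat ℓ (n - 1)) (padicValNat ℓ (∑ i ∈ range ℓ, n ^ i)) = 1 := by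
  have hℓn := hℓ.out.dvd_sub_one_of_dvd_pow_self_sub_one h
  have ha : 1 ≤ padicValNat ℓ (n - 1) := one_le_padicValNat_of_dvd (by omega) hℓn
  have hb : 1 ≤ padicValNat ℓ (∑ i ∈ range ℓ, n ^ i) :=
    one_le_padicValNat_of_dvd (geom_sum_pos n.zero_le hℓ.out.ne_zero).ne'
      (((Nat.geom_sum_modEq_sub_one hn.le ℓ).dvd_iff hℓn).mpr dvd_rfl)
  have := min_padicValNat_sub_one_geom_sum_le (ℓ := ℓ) hn hℓ.out.ne_zero
  rw [padicValNat_self] at this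
  omega

lemma padicValNat_geom_sum_self {n : ℕ} (hℓ2 : ℓ ≠ 2) (hn : 1 < n) (h : ℓ ∣ n - 1) :
    padicValNat ℓ (∑ i ∈ range ℓ, n ^ i) = 1 := by
  have hndvd : ¬ ℓ ∣ n := fun hdvd =>
    hℓ.out.one_lt.ne' (Nat.dvd_one.mp (by simpa [Nat.sub_sub_self hn.le] using Nat.dvd_sub hdvd h))
  have hlte := padicValNat.pow_sub_pow (hℓ.out.odd_of_ne_two hℓ2) hn h hndvd hℓ.out.ne_zero
  rw [one_pow, padicValNat_self, padicValNat_pow_sub_one hn hℓ.out.ne_zero] at hlte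
  omega

end padicValNat

lemma three_le_padicValNat_two_sq_sub_one {n : ℕ} (hn : Odd n) (h1 : 1 < n) :
    3 ≤ padicValNat 2 (n ^ 2 - 1) :=
  (padicValNat_dvd_iff_le (Nat.sub_ne_zero_of_lt (Nat.one_lt_pow two_ne_zero h1))).mp
    (Nat.eight_dvd_sq_sub_one_of_odd hn)

theorem stmt_0_general (p n k : ℕ) (hp : p.Prime)
    (hodd : Odd n) (hdvd : k ∣ n ^ p - 1)
    (ℓ : ℕ) (hℓ : ℓ.Prime) (hℓk : ℓ ∣ k)
    (α β γ : ℕ)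
    (hα : α = padicValNat ℓ k)
    (hβ : β = padicValNat ℓ (Nat.gcd (n - 1) k))
    (hγ : γ = padicValNat ℓ (Nat.gcd (∑ i ∈ Finset.range p, n ^ i) k)) :
    (ℓ ≠ p → (β = 0 ∧ γ = α) ∨ (β = α ∧ γ = 0)) ∧
    (ℓ = p → α = 1 → β = 1 ∧ γ = 1) ∧
    (ℓ = p → p = 2 → α = 2 → (β = 1 ∧ γ = 2) ∨ (β = 2 ∧ γ = 1)) ∧
    (ℓ = p → p = 2 → 2 < α →
      (β = 1 ∧ (γ = α - 1 ∨ γ = α)) ∨ (γ = 1 ∧ (β = α - 1 ∨ β = α))) ∧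
    (ℓ = p → 2 < p → 2 ≤ α → (β = α - 1 ∨ β = α) ∧ γ = 1) := by
  have := Fact.mk hℓ
  have := Fact.mk hp
  subst hα hβ hγ
  obtain rfl | hn : n = 1 ∨ 1 < n := by have := hodd.pos; omega
  · simp only [Nat.sub_self, Nat.gcd_zero_left, one_pow, sum_const, card_range, smul_eq_mul,
      mul_one, padicValNat_gcd_prime_of_dvd hp hℓk]
    rcases eq_or_ne ℓ p with rfl | hℓp
    · rw [padicValNat_self]; grind
    · rw [padicValNat_primes hℓp]; grind
  have hpow : n ^ p - 1 ≠ 0 := Nat.sub_ne_zero_of_lt (Nat.one_lt_pow hp.ne_zero hn)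
  have hk : k ≠ 0 := ne_zero_of_dvd_ne_zero hpow hdvd
  rw [padicValNat_gcd (by omega) hk, padicValNat_gcd (geom_sum_pos n.zero_le hp.ne_zero).ne' hk]
  have hαab := padicValNat_pow_sub_one (ℓ := ℓ) hn hp.ne_zero ▸ padicValNat_le_of_dvd hpow hdvd
  rcases eq_or_ne ℓ p with rfl | hℓp
  · have hmin := min_padicValNat_sub_one_geom_sum_self hn (hℓk.trans hdvd)
    have htwo : ℓ = 2 → 3 ≤ padicValNat ℓ (n - 1) + padicValNat ℓ (∑ i ∈ range ℓ, n ^ i) := by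
      rintro rfl
      rw [← padicValNat_pow_sub_one hn two_ne_zero]
      exact three_le_padicValNat_two_sq_sub_one hodd hn
    have hodd_prime : 2 < ℓ → padicValNat ℓ (∑ i ∈ range ℓ, n ^ i) = 1 := fun h =>
      padicValNat_geom_sum_self (by omega) hn (hℓ.dvd_sub_one_of_dvd_pow_self_sub_one
        (hℓk.trans hdvd))
    grind
  · have := min_padicValNat_sub_one_geom_sum_eq_zero (ℓ := ℓ) hn hp hℓp
    grind

/-- Lemma 2.2: key arithmetic lemma on valuations of gcd(n-1,k) and
gcd(n^(p-1)+...+n+1, k) when k ∣ n^p - 1. -/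
theorem stmt_0 (p n k : ℕ) (hp : p.Prime) (hn : 0 < n) (hk : 0 < k)
    (hodd : Odd n) (hdvd : k ∣ n ^ p - 1)
    (ℓ : ℕ) (hℓ : ℓ.Prime) (hℓk : ℓ ∣ k)
    (α β γ : ℕ)
    (hα : α = padicValNat ℓ k)
    (hβ : β = padicValNat ℓ (Nat.gcd (n - 1) k))
    (hγ : γ = padicValNat ℓ (Nat.gcd (∑ i ∈ Finset.range p, n ^ i) k)) :
    (ℓ ≠ p → (β = 0 ∧ γ = α) ∨ (β = α ∧ γ = 0)) ∧
    (ℓ = p → α = 1 → β = 1 ∧ γ = 1) ∧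
    (ℓ = p → p = 2 → α = 2 → (β = 1 ∧ γ = 2) ∨ (β = 2 ∧ γ = 1)) ∧
    (ℓ = p → p = 2 → 2 < α →
      (β = 1 ∧ (γ = α - 1 ∨ γ = α)) ∨ (γ = 1 ∧ (β = α - 1 ∨ β = α))) ∧
    (ℓ = p → 2 < p → 2 ≤ α → (β = α - 1 ∨ β = α) ∧ γ = 1) :=
  stmt_0_general p n k hp hodd hdvd ℓ hℓ hℓk α β γ hα hβ hγ
end

section
/- Let p be a prime and let n be a positive integer with gcd(n, m) = 1 such that m divides n^p − 1, and set d = gcd(n−1, m). Then for every prime ℓ dividing m, writing α = ν_ℓ(m) and β = ν_ℓ(d): β ∈ {0, α} if ℓ ≠ p; β = 1 if ℓ = p and α = 1; β ∈ {1, α−1, α} if ℓ = p = 2 and α ≥ 2; and β ∈ {α−1, α} if ℓ = p > 2 and α ≥ 2. -/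
/-!
With `e = ν_ℓ(n - 1)` and `α = ν_ℓ(m)` we have `ν_ℓ(d) = min e α`, and `m ∣ n ^ p - 1` gives
`α ≤ ν_ℓ(n ^ p - 1)`, which lifting the exponent computes. If `ℓ ≠ p` and `ℓ ∣ n - 1` it is `e`,
so `ν_ℓ(d) ∈ {0, α}`. If `ℓ = p`, Fermat's little theorem gives `p ∣ n - 1`, so `e ≥ 1`, and
`ν_p(n ^ p - 1) = e + 1` once `p` is odd or `4 ∣ n - 1`; then `α ≤ e + 1` forces
`min e α ∈ {α - 1, α}`. The remaining case `p = 2`, `n ≡ 3 (mod 4)` is `e = 1`.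
-/

theorem Nat.Prime.not_dvd_of_dvd_sub_one {p n : ℕ} (hp : p.Prime) (hn : 0 < n) (h : p ∣ n - 1) :
    ¬ p ∣ n := fun h' =>
  hp.not_dvd_one (by simpa [Nat.sub_sub_self hn] using Nat.dvd_sub h' h)

theorem Nat.Prime.dvd_sub_one_of_dvd_pow_self_sub_one_s1 {p n : ℕ} (hp : p.Prime) (hn : 0 < n)
    (h : p ∣ n ^ p - 1) : p ∣ n - 1 := by
  have := Fact.mk hp
  rw [← ZMod.natCast_eq_zero_iff, Nat.cast_sub (Nat.one_le_pow _ _ hn), Nat.cast_pow,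
    ZMod.pow_card] at h
  rwa [← ZMod.natCast_eq_zero_iff, Nat.cast_sub hn]

section padicValNat

variable {ℓ : ℕ} [hℓ : Fact ℓ.Prime]

theorem padicValNat_gcd_s1 {a b : ℕ} (ha : a ≠ 0) (hb : b ≠ 0) :
    padicValNat ℓ (a.gcd b) = min (padicValNat ℓ a) (padicValNat ℓ b) := by
  simp only [← Nat.factorization_def _ hℓ.out, Nat.factorization_gcd ha hb, Finsupp.inf_apply]

theorem padicValNat_le_of_dvd_s1 {a b : ℕ} (hb : b ≠ 0) (h : a ∣ b) :
    padicValNat ℓ a ≤ padicValNat ℓ b :=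
  (padicValNat_dvd_iff_le hb).mp (pow_padicValNat_dvd.trans h)

theorem padicValNat_pow_sub_one_of_not_dvd {n k : ℕ} (hn : 1 < n) (hℓn : ℓ ∣ n - 1)
    (hℓk : ¬ ℓ ∣ k) : padicValNat ℓ (n ^ k - 1) = padicValNat ℓ (n - 1) := by
  have hk : k ≠ 0 := by rintro rfl; exact hℓk (dvd_zero ℓ)
  rw [← Nat.cast_inj (R := ℕ∞),
    padicValNat_eq_emultiplicity (n := n ^ k - 1)
      (Nat.sub_ne_zero_of_lt (Nat.one_lt_pow hk hn)),
    padicValNat_eq_emultiplicity (n := n - 1) (by omega),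
    ← Int.natCast_emultiplicity, ← Int.natCast_emultiplicity,
    Nat.cast_sub (Nat.one_le_pow _ _ (by omega)), Nat.cast_sub hn.le]
  have hℓn' : (ℓ : ℤ) ∣ n - 1 := by
    simpa [Nat.cast_sub hn.le] using Int.natCast_dvd_natCast.mpr hℓn
  push_cast
  simpa using emultiplicity_pow_sub_pow_of_prime (Nat.prime_iff_prime_int.mp hℓ.out) (y := 1) hℓn'
    (Int.natCast_dvd_natCast.not.mpr (hℓ.out.not_dvd_of_dvd_sub_one (by omega) hℓn))
    (Int.natCast_dvd_natCast.not.mpr hℓk)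

theorem padicValNat_pow_self_sub_one {n : ℕ} (hn : 1 < n) (hℓn : ℓ ∣ n - 1)
    (h4 : ℓ = 2 → 4 ∣ n - 1) : padicValNat ℓ (n ^ ℓ - 1) = padicValNat ℓ (n - 1) + 1 := by
  rcases eq_or_ne ℓ 2 with rfl | hℓ2
  · have h := padicValNat.pow_two_sub_one hn (by omega) two_ne_zero even_two
    have hn1 : padicValNat 2 (n + 1) = 1 := by
      obtain ⟨k, hk⟩ : ∃ k, n + 1 = 2 * (2 * k + 1) := ⟨(n - 1) / 4, by omega⟩
      rw [hk, padicValNat.mul two_ne_zero (by omega), padicValNat.self one_lt_two,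
        padicValNat.eq_zero_of_not_dvd (by omega)]
    rw [hn1, padicValNat.self one_lt_two] at h
    omega
  · simpa [padicValNat.self hℓ.out.one_lt] using
      padicValNat.pow_sub_pow (hℓ.out.odd_of_ne_two hℓ2) hn (by simpa using hℓn)
        (hℓ.out.not_dvd_of_dvd_sub_one (by omega) hℓn) hℓ.out.ne_zero

end padicValNat

theorem stmt_1_general (m : ℕ)
    (p n : ℕ) (hp : p.Prime) (hdvd : m ∣ n ^ p - 1)
    (d : ℕ) (hd : d = Nat.gcd (n - 1) m)
    (ℓ : ℕ) (hℓ : ℓ.Prime) (hℓm : ℓ ∣ m)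
    (α β : ℕ) (hα : α = padicValNat ℓ m) (hβ : β = padicValNat ℓ d) :
    (ℓ ≠ p → β = 0 ∨ β = α) ∧
    (ℓ = p → α = 1 → β = 1) ∧
    (ℓ = p → p = 2 → 2 ≤ α → β = 1 ∨ β = α - 1 ∨ β = α) ∧
    (ℓ = p → 2 < p → 2 ≤ α → β = α - 1 ∨ β = α) := by
  have := Fact.mk hℓ
  subst hd hα hβ
  rcases le_or_gt n 1 with hn | hn
  · rw [Nat.sub_eq_zero_of_le hn, Nat.gcd_zero_left]
    omega
  have hN : n ^ p - 1 ≠ 0 := Nat.sub_ne_zero_of_lt (Nat.one_lt_pow hp.ne_zero hn)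
  have hm : m ≠ 0 := by rintro rfl; exact hN (zero_dvd_iff.mp hdvd)
  have hα₁ := one_le_padicValNat_of_dvd hm hℓm
  have hαN := padicValNat_le_of_dvd_s1 (ℓ := ℓ) hN hdvd
  rw [padicValNat_gcd_s1 (by omega) hm]
  rcases eq_or_ne ℓ p with rfl | hℓp
  · have hℓn := hℓ.dvd_sub_one_of_dvd_pow_self_sub_one_s1 (by omega) (hℓm.trans hdvd)
    have he₁ := one_le_padicValNat_of_dvd (by omega) hℓn
    refine ⟨fun h => absurd rfl h, fun _ _ => by omega, fun _ hℓ2 _ => ?_, fun _ _ _ => ?_⟩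
    · rcases lt_or_ge (padicValNat ℓ (n - 1)) 2 with he | he
      · omega
      · have h4 : 4 ∣ n - 1 := by
          simpa [hℓ2] using (padicValNat_dvd_iff_le (by omega)).mpr he
        have := padicValNat_pow_self_sub_one hn hℓn fun _ => h4
        omega
    · have := padicValNat_pow_self_sub_one hn hℓn (by omega)
      omega
  · refine ⟨fun _ => ?_, fun h => absurd h hℓp, fun h => absurd h hℓp, fun h => absurd h hℓp⟩
    by_cases hℓn : ℓ ∣ n - 1
    · have := padicValNat_pow_sub_one_of_not_dvd hn hℓn
        ((Nat.prime_dvd_prime_iff_eq hℓ hp).not.mpr hℓp)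
      omega
    · rw [padicValNat.eq_zero_of_not_dvd hℓn]
      omega

/-- Lemma 2.3: necessary conditions on the valuations of d = gcd(n-1, m)
when m = q - χ divides n^p - 1. -/
theorem stmt_1 (q : ℕ) (hq : ∃ p k : ℕ, p.Prime ∧ Odd p ∧ 0 < k ∧ q = p ^ k)
    (χ : ℤ) (hχ : χ = 1 ∨ χ = -1) (m : ℕ) (hm : (m : ℤ) = (q : ℤ) - χ)
    (p n : ℕ) (hp : p.Prime) (hn : 0 < n)
    (hcop : Nat.gcd n m = 1) (hdvd : m ∣ n ^ p - 1)
    (d : ℕ) (hd : d = Nat.gcd (n - 1) m)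
    (ℓ : ℕ) (hℓ : ℓ.Prime) (hℓm : ℓ ∣ m)
    (α β : ℕ) (hα : α = padicValNat ℓ m) (hβ : β = padicValNat ℓ d) :
    (ℓ ≠ p → β = 0 ∨ β = α) ∧
    (ℓ = p → α = 1 → β = 1) ∧
    (ℓ = p → p = 2 → 2 ≤ α → β = 1 ∨ β = α - 1 ∨ β = α) ∧
    (ℓ = p → 2 < p → 2 ≤ α → β = α - 1 ∨ β = α) :=
  stmt_1_general m p n hp hdvd d hd ℓ hℓ hℓm α β hα hβ
end

section
/- Let p be an odd prime and let d be a proper divisor of m. Then there exists a positive integer n such that m divides n^p − 1 and gcd(n−1, m) = d, if and only if for every prime ℓ dividing m, writing α = ν_ℓ(m) and β = ν_ℓ(d): β ∈ {α−1, α} if ℓ = p and α ≥ 2; β ∈ {0, α} if ℓ ≡ 1 (mod p); and β = α in all other cases. -/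
/-!
Both conditions on `n` depend only on `n` modulo the prime powers `ℓ ^ α` exactly dividing `m`,
so by the Chinese remainder theorem the question is local: which `β ≤ α` arise as
`gcd (x - 1) (ℓ ^ α) = ℓ ^ β` with `x ^ p ≡ 1 [MOD ℓ ^ α]`? If `ℓ ≠ p` and `p ∤ ℓ - 1`, then `p` is
prime to `φ (ℓ ^ α)`, which forces `x ≡ 1`. If `ℓ = p`, Fermat gives `p ∣ x - 1`, and lifting the
exponent, `v_p (x ^ p - 1) = v_p (x - 1) + 1`, gives `β ≥ α - 1`. If `p ∣ ℓ - 1`, either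
`ℓ ∤ x - 1`, or lifting the exponent gives `x ≡ 1 [MOD ℓ ^ α]`. Conversely `1 + p ^ (α - 1)` and
the elements of order `p` in `(ZMod (ℓ ^ α))ˣ` realize the exceptional values of `β`.
-/

lemma dvd_sub_one_iff_natCast_eq_one {M x : ℕ} (hx : 0 < x) :
    M ∣ x - 1 ↔ (x : ZMod M) = 1 := by
  rw [← ZMod.natCast_eq_zero_iff, Nat.cast_sub hx, Nat.cast_one, sub_eq_zero]

lemma dvd_pow_sub_one_iff_natCast_pow_eq_one {M x n : ℕ} (hx : 0 < x) :
    M ∣ x ^ n - 1 ↔ (x : ZMod M) ^ n = 1 := by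
  rw [dvd_sub_one_iff_natCast_eq_one (pow_pos hx n), Nat.cast_pow]

lemma gcd_sub_one_eq_of_natCast_eq {M x y : ℕ} (hx : 0 < x) (hy : 0 < y)
    (h : (x : ZMod M) = y) : (x - 1).gcd M = (y - 1).gcd M :=
  Nat.ModEq.gcd_eq <| (ZMod.natCast_eq_natCast_iff _ _ _).mp <| by
    rw [Nat.cast_sub hx, Nat.cast_sub hy, h]

lemma ZMod.eq_one_of_pow_eq_one_of_coprime_totient {M k : ℕ} {a : ZMod M} (hk : k ≠ 0)
    (hcop : k.Coprime M.totient) (ha : a ^ k = 1) : a = 1 := by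
  obtain ⟨u, rfl⟩ := IsUnit.of_pow_eq_one ha hk
  have hu : u ^ k.gcd M.totient = 1 :=
    pow_gcd_eq_one.mpr ⟨Units.ext (by simpa using ha), ZMod.pow_totient u⟩
  rw [hcop.gcd_eq_one, pow_one] at hu
  simp [hu]

lemma Nat.mod_eq_one_iff_dvd_sub_one {ℓ p : ℕ} (hℓ : 0 < ℓ) (hp : 1 < p) :
    ℓ % p = 1 ↔ p ∣ ℓ - 1 := by
  rw [← Nat.modEq_iff_dvd' hℓ, Nat.ModEq, Nat.mod_eq_of_lt hp, eq_comm]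

section PrimePower

variable {ℓ p : ℕ} [hℓ : Fact ℓ.Prime]

/-- Lifting the exponent, phrased by divisibility so that `x = 1` (where `padicValNat ℓ 0 = 0`)
is no exception. -/
lemma pow_add_padicValNat_dvd_pow_sub_one_iff (hℓodd : Odd ℓ) {x n k : ℕ} (hx : 0 < x)
    (hn : n ≠ 0) (hdvd : ℓ ∣ x - 1) :
    ℓ ^ (k + padicValNat ℓ n) ∣ x ^ n - 1 ↔ ℓ ^ k ∣ x - 1 := by
  obtain rfl | hx1 : x = 1 ∨ 1 < x := by omega
  · simp
  have hℓx : ¬ ℓ ∣ x := fun h => hℓ.out.not_dvd_one <| by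
    simpa only [Nat.sub_sub_self hx] using Nat.dvd_sub h hdvd
  have hlte := padicValNat.pow_sub_pow (y := 1) hℓodd hx1 hdvd hℓx hn
  rw [one_pow] at hlte
  have hxn : 1 < x ^ n := Nat.one_lt_pow hn hx1
  rw [padicValNat_dvd_iff_le (by omega), padicValNat_dvd_iff_le (by omega), hlte]
  omega

lemma dvd_sub_one_of_pow_dvd_pow_self_sub_one (hℓodd : Odd ℓ) {x α : ℕ} (hx : 0 < x)
    (hα : α ≠ 0) (h : ℓ ^ α ∣ x ^ ℓ - 1) : ℓ ∣ x - 1 ∧ ℓ ^ (α - 1) ∣ x - 1 := by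
  have hfermat : ℓ ∣ x - 1 := by
    have h1 : (x : ZMod ℓ) ^ ℓ = 1 :=
      (dvd_pow_sub_one_iff_natCast_pow_eq_one hx).mp ((dvd_pow_self ℓ hα).trans h)
    rwa [ZMod.pow_card, ← dvd_sub_one_iff_natCast_eq_one hx] at h1
  refine ⟨hfermat, ?_⟩
  rw [← pow_add_padicValNat_dvd_pow_sub_one_iff hℓodd hx hℓ.out.ne_zero hfermat,
    padicValNat_self, Nat.sub_add_cancel (by omega)]
  exact h

lemma pow_dvd_sub_one_of_pow_dvd_pow_sub_one (hp : p.Prime) (hℓp : ℓ ≠ p) (hpℓ : ¬ p ∣ ℓ - 1)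
    {x α : ℕ} (hx : 0 < x) (h : ℓ ^ α ∣ x ^ p - 1) : ℓ ^ α ∣ x - 1 := by
  obtain rfl | hα := Nat.eq_zero_or_pos α
  · simp
  rw [dvd_pow_sub_one_iff_natCast_pow_eq_one hx] at h
  rw [dvd_sub_one_iff_natCast_eq_one hx]
  refine ZMod.eq_one_of_pow_eq_one_of_coprime_totient hp.ne_zero ?_ h
  rw [Nat.totient_prime_pow hℓ.out hα]
  exact ((Nat.coprime_primes hp hℓ.out).mpr hℓp.symm).pow_right _ |>.mul_right
    (hp.coprime_iff_not_dvd.mpr hpℓ)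

lemma pow_dvd_pow_sub_one_iff_of_dvd_sub_one (hp : p.Prime) (hpℓ : p ∣ ℓ - 1) {x α : ℕ}
    (hx : 0 < x) (hdvd : ℓ ∣ x - 1) : ℓ ^ α ∣ x ^ p - 1 ↔ ℓ ^ α ∣ x - 1 := by
  have hpltℓ : p < ℓ := by
    have := Nat.le_of_dvd (Nat.sub_pos_of_lt hℓ.out.one_lt) hpℓ
    have := hp.pos
    omega
  have hℓodd : Odd ℓ := hℓ.out.odd_of_ne_two (by have := hp.two_le; omega)
  rw [← pow_add_padicValNat_dvd_pow_sub_one_iff hℓodd hx hp.ne_zero hdvd,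
    padicValNat.eq_zero_of_not_dvd (Nat.not_dvd_of_pos_of_lt hp.pos hpltℓ), add_zero]

lemma exists_pow_dvd_pow_sub_one_not_dvd_sub_one (hp : p.Prime) (hpℓ : p ∣ ℓ - 1) {α : ℕ}
    (hα : α ≠ 0) : ∃ x, 0 < x ∧ ℓ ^ α ∣ x ^ p - 1 ∧ ¬ ℓ ∣ x - 1 := by
  have := Fact.mk hp
  have : Fact (1 < ℓ ^ α) := ⟨Nat.one_lt_pow hα hℓ.out.one_lt⟩
  obtain ⟨u, hu⟩ := exists_prime_orderOf_dvd_card (G := (ZMod (ℓ ^ α))ˣ) p <| by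
    rw [ZMod.card_units_eq_totient, Nat.totient_prime_pow hℓ.out (Nat.pos_of_ne_zero hα)]
    exact hpℓ.mul_left _
  set x := (u : ZMod (ℓ ^ α)).val
  have hxu : (x : ZMod (ℓ ^ α)) = u := ZMod.natCast_zmod_val _
  have hx : 0 < x := ZMod.val_pos.mpr u.ne_zero
  have hxp : ℓ ^ α ∣ x ^ p - 1 := by
    rw [dvd_pow_sub_one_iff_natCast_pow_eq_one hx, hxu, ← Units.val_pow_eq_pow_val, ← hu,
      pow_orderOf_eq_one, Units.val_one]
  refine ⟨x, hx, hxp, fun hdvd => hp.one_lt.ne ?_⟩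
  have hu1 : u = 1 := Units.ext <| by
    rw [Units.val_one, ← hxu, ← dvd_sub_one_iff_natCast_eq_one hx,
      ← pow_dvd_pow_sub_one_iff_of_dvd_sub_one hp hpℓ hx hdvd]
    exact hxp
  rw [← hu, hu1, orderOf_one]

lemma exponent_cases_of_gcd_sub_one_eq (hp : p.Prime) (hpodd : Odd p) {x α β : ℕ}
    (hα : α ≠ 0) (hβ : β ≤ α) (hx : 0 < x) (hxp : ℓ ^ α ∣ x ^ p - 1)
    (hgcd : (x - 1).gcd (ℓ ^ α) = ℓ ^ β) :
    β = α ∨ (ℓ = p ∧ 2 ≤ α ∧ β = α - 1) ∨ (p ∣ ℓ - 1 ∧ β = 0) := by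
  have hle : ∀ k ≤ α, ℓ ^ k ∣ x - 1 → k ≤ β := fun k hk h =>
    (Nat.pow_dvd_pow_iff_le_right hℓ.out.one_lt).mp (hgcd ▸ Nat.dvd_gcd h (pow_dvd_pow ℓ hk))
  by_cases hℓp : ℓ = p
  · subst hℓp
    obtain ⟨h1, h2⟩ := dvd_sub_one_of_pow_dvd_pow_self_sub_one hpodd hx hα hxp
    have := hle 1 (by omega) (by rwa [pow_one])
    have := hle (α - 1) (by omega) h2
    omega
  by_cases hpℓ : p ∣ ℓ - 1
  · by_cases hdvd : ℓ ∣ x - 1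
    · exact .inl <| le_antisymm hβ <|
        hle α le_rfl ((pow_dvd_pow_sub_one_iff_of_dvd_sub_one hp hpℓ hx hdvd).mp hxp)
    · refine .inr <| .inr ⟨hpℓ, Nat.eq_zero_of_not_pos fun hβ0 => hdvd ?_⟩
      exact (dvd_pow_self ℓ hβ0.ne').trans (hgcd ▸ Nat.gcd_dvd_left _ _)
  · exact .inl <| le_antisymm hβ <|
      hle α le_rfl (pow_dvd_sub_one_of_pow_dvd_pow_sub_one hp hℓp hpℓ hx hxp)

lemma exists_gcd_sub_one_eq_of_exponent_cases (hp : p.Prime) (hpodd : Odd p) {α β : ℕ}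
    (hα : α ≠ 0) (h : β = α ∨ (ℓ = p ∧ 2 ≤ α ∧ β = α - 1) ∨ (p ∣ ℓ - 1 ∧ β = 0)) :
    ∃ x, 0 < x ∧ ℓ ^ α ∣ x ^ p - 1 ∧ (x - 1).gcd (ℓ ^ α) = ℓ ^ β := by
  rcases h with rfl | ⟨rfl, hα2, rfl⟩ | ⟨hpℓ, rfl⟩
  · exact ⟨1, one_pos, by simp, by simp⟩
  · -- lifting the exponent gains exactly one factor `ℓ`
    have hx : (ℓ ^ (α - 1) + 1) - 1 = ℓ ^ (α - 1) := Nat.add_sub_cancel _ _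
    refine ⟨ℓ ^ (α - 1) + 1, by positivity, ?_, ?_⟩
    · have hdvd : ℓ ∣ (ℓ ^ (α - 1) + 1) - 1 := hx ▸ dvd_pow_self ℓ (by omega)
      have := (pow_add_padicValNat_dvd_pow_sub_one_iff (k := α - 1) hpodd (by positivity)
        hp.ne_zero hdvd).mpr (hx ▸ dvd_rfl)
      rwa [padicValNat_self, Nat.sub_add_cancel (by omega)] at this
    · rw [hx]
      exact Nat.gcd_eq_left (pow_dvd_pow ℓ (Nat.sub_le α 1))
  · obtain ⟨x, hx, hxp, hdvd⟩ := exists_pow_dvd_pow_sub_one_not_dvd_sub_one hp hpℓ hα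
    refine ⟨x, hx, hxp, ?_⟩
    rw [pow_zero]
    exact (hℓ.out.coprime_iff_not_dvd.mpr hdvd).symm.pow_right α

lemma exists_gcd_sub_one_eq_iff_exponent_cases (hp : p.Prime) (hpodd : Odd p) {α β : ℕ}
    (hα : α ≠ 0) (hβ : β ≤ α) :
    (∃ x, 0 < x ∧ ℓ ^ α ∣ x ^ p - 1 ∧ (x - 1).gcd (ℓ ^ α) = ℓ ^ β) ↔
      β = α ∨ (ℓ = p ∧ 2 ≤ α ∧ β = α - 1) ∨ (p ∣ ℓ - 1 ∧ β = 0) :=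
  ⟨fun ⟨_, hx, hxp, hgcd⟩ => exponent_cases_of_gcd_sub_one_eq hp hpodd hα hβ hx hxp hgcd,
    exists_gcd_sub_one_eq_of_exponent_cases hp hpodd hα⟩

end PrimePower

lemma exponent_cases_iff {ℓ p α β : ℕ} (hℓ : ℓ.Prime) (hp : p.Prime) :
    (β = α ∨ (ℓ = p ∧ 2 ≤ α ∧ β = α - 1) ∨ (p ∣ ℓ - 1 ∧ β = 0)) ↔
      (ℓ = p → 2 ≤ α → β = α - 1 ∨ β = α) ∧ (ℓ % p = 1 → β = 0 ∨ β = α) ∧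
        (¬ (ℓ = p ∧ 2 ≤ α) → ¬ ℓ % p = 1 → β = α) := by
  rw [Nat.mod_eq_one_iff_dvd_sub_one hℓ.pos hp.one_lt]
  have hpp : ¬ p ∣ p - 1 := fun h => by
    have := Nat.le_of_dvd (Nat.sub_pos_of_lt hp.one_lt) h
    have := hp.pos
    omega
  constructor
  · rintro (rfl | ⟨rfl, hα2, rfl⟩ | ⟨hpℓ, rfl⟩)
    · simp
    · exact ⟨fun _ _ => .inl rfl, fun h => absurd h hpp, fun h => absurd ⟨rfl, hα2⟩ h⟩
    · exact ⟨fun h => absurd (h ▸ hpℓ) hpp, fun _ => .inl rfl, fun _ h => absurd hpℓ h⟩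
  · rintro ⟨h1, h2, h3⟩
    by_cases hc1 : ℓ = p ∧ 2 ≤ α
    · exact (h1 hc1.1 hc1.2).elim (fun h => .inr (.inl ⟨hc1.1, hc1.2, h⟩)) .inl
    by_cases hc2 : p ∣ ℓ - 1
    · exact (h2 hc2).elim (fun h => .inr (.inr ⟨hc2, h⟩)) .inl
    · exact .inl (h3 hc1 hc2)

section LocalGlobal

variable {m : ℕ}

lemma dvd_iff_forall_pow_padicValNat_dvd {a : ℕ} (hm : m ≠ 0) :
    m ∣ a ↔ ∀ ℓ, ℓ.Prime → ℓ ∣ m → ℓ ^ padicValNat ℓ m ∣ a := by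
  refine ⟨fun h ℓ _ _ => pow_padicValNat_dvd.trans h, fun h => ?_⟩
  refine (Nat.dvd_iff_prime_pow_dvd_dvd a m).mpr fun ℓ k hℓ hk => ?_
  obtain rfl | hk0 := Nat.eq_zero_or_pos k
  · exact pow_zero ℓ ▸ one_dvd a
  have := Fact.mk hℓ
  have hkm : k ≤ padicValNat ℓ m := (padicValNat_dvd_iff_le hm).mp hk
  exact (pow_dvd_pow ℓ hkm).trans (h ℓ hℓ ((dvd_pow_self ℓ hk0.ne').trans hk))

lemma gcd_pow_padicValNat_of_dvd {ℓ g : ℕ} (hℓ : ℓ.Prime) (hm : m ≠ 0) (hg : g ∣ m) :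
    g.gcd (ℓ ^ padicValNat ℓ m) = ℓ ^ padicValNat ℓ g := by
  have := Fact.mk hℓ
  have hg0 : g ≠ 0 := ne_zero_of_dvd_ne_zero hm hg
  obtain ⟨k, -, hk⟩ := (Nat.dvd_prime_pow hℓ).mp (Nat.gcd_dvd_right g (ℓ ^ padicValNat ℓ m))
  rw [hk]
  refine congrArg _ (le_antisymm ((padicValNat_dvd_iff_le hg0).mp (hk ▸ Nat.gcd_dvd_left _ _)) ?_)
  have hgm : padicValNat ℓ g ≤ padicValNat ℓ m :=
    (padicValNat_dvd_iff_le hm).mp (pow_padicValNat_dvd.trans hg)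
  exact (Nat.pow_dvd_pow_iff_le_right hℓ.one_lt).mp
    (hk ▸ Nat.dvd_gcd pow_padicValNat_dvd (pow_dvd_pow ℓ hgm))

lemma gcd_eq_iff_forall_gcd_pow_padicValNat {a d : ℕ} (hm : m ≠ 0) (hd : d ∣ m) :
    a.gcd m = d ↔
      ∀ ℓ, ℓ.Prime → ℓ ∣ m → a.gcd (ℓ ^ padicValNat ℓ m) = ℓ ^ padicValNat ℓ d := by
  have key (ℓ : ℕ) (hℓ : ℓ.Prime) :
      a.gcd (ℓ ^ padicValNat ℓ m) = ℓ ^ padicValNat ℓ (a.gcd m) := by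
    rw [← gcd_pow_padicValNat_of_dvd hℓ hm (Nat.gcd_dvd_right a m), Nat.gcd_assoc,
      Nat.gcd_eq_right pow_padicValNat_dvd]
  refine ⟨fun h ℓ hℓ _ => h ▸ key ℓ hℓ, fun h => ?_⟩
  have hgcd0 : a.gcd m ≠ 0 := fun h0 => hm (Nat.eq_zero_of_gcd_eq_zero_right h0)
  refine (Nat.eq_iff_prime_padicValNat_eq _ _ hgcd0 (ne_zero_of_dvd_ne_zero hm hd)).mpr
    fun ℓ hℓ => ?_
  by_cases hℓm : ℓ ∣ m
  · exact Nat.pow_right_injective hℓ.two_le ((key ℓ hℓ).symm.trans (h ℓ hℓ hℓm))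
  · rw [padicValNat.eq_zero_of_not_dvd fun h => hℓm (h.trans (Nat.gcd_dvd_right a m)),
      padicValNat.eq_zero_of_not_dvd fun h => hℓm (h.trans hd)]

lemma exists_pos_natCast_eq_of_forall_prime_dvd (hm : m ≠ 0) (x : ℕ → ℕ) :
    ∃ n, 0 < n ∧ ∀ ℓ, ℓ.Prime → ℓ ∣ m → (n : ZMod (ℓ ^ padicValNat ℓ m)) = x ℓ := by
  obtain ⟨k, hk⟩ := Nat.chineseRemainderOfFinset x (fun ℓ => ℓ ^ padicValNat ℓ m)
    m.primeFactors (fun ℓ hℓ => pow_ne_zero _ (Nat.prime_of_mem_primeFactors hℓ).ne_zero)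
    fun ℓ₁ h₁ ℓ₂ h₂ hne => Nat.Coprime.pow _ _ <| (Nat.coprime_primes
      (Nat.prime_of_mem_primeFactors h₁) (Nat.prime_of_mem_primeFactors h₂)).mpr hne
  refine ⟨k + m, by omega, fun ℓ hℓ hℓm => ?_⟩
  rw [Nat.cast_add, (ZMod.natCast_eq_zero_iff _ _).mpr pow_padicValNat_dvd, add_zero]
  exact (ZMod.natCast_eq_natCast_iff _ _ _).mpr (hk ℓ (Nat.mem_primeFactors.mpr ⟨hℓ, hℓm, hm⟩))

theorem exists_pow_sub_one_gcd_eq_iff_forall_prime_dvd {d p : ℕ} (hm : m ≠ 0) (hd : d ∣ m) :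
    (∃ n, 0 < n ∧ m ∣ n ^ p - 1 ∧ (n - 1).gcd m = d) ↔
      ∀ ℓ, ℓ.Prime → ℓ ∣ m → ∃ x, 0 < x ∧ ℓ ^ padicValNat ℓ m ∣ x ^ p - 1 ∧
        (x - 1).gcd (ℓ ^ padicValNat ℓ m) = ℓ ^ padicValNat ℓ d := by
  constructor
  · rintro ⟨n, hn, hmn, rfl⟩ ℓ hℓ hℓm
    exact ⟨n, hn, pow_padicValNat_dvd.trans hmn,
      (gcd_eq_iff_forall_gcd_pow_padicValNat hm (Nat.gcd_dvd_right _ _)).mp rfl ℓ hℓ hℓm⟩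
  · intro h
    choose! x hx hxp hgcd using h
    obtain ⟨n, hn, hnx⟩ := exists_pos_natCast_eq_of_forall_prime_dvd hm x
    refine ⟨n, hn, (dvd_iff_forall_pow_padicValNat_dvd hm).mpr fun ℓ hℓ hℓm => ?_,
      (gcd_eq_iff_forall_gcd_pow_padicValNat hm hd).mpr fun ℓ hℓ hℓm => ?_⟩
    · rw [dvd_pow_sub_one_iff_natCast_pow_eq_one hn, hnx ℓ hℓ hℓm,
        ← dvd_pow_sub_one_iff_natCast_pow_eq_one (hx ℓ hℓ hℓm)]
      exact hxp ℓ hℓ hℓm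
    · rw [gcd_sub_one_eq_of_natCast_eq hn (hx ℓ hℓ hℓm) (hnx ℓ hℓ hℓm)]
      exact hgcd ℓ hℓ hℓm

end LocalGlobal

theorem stmt_3_general (q : ℕ) (hq : ∃ p k : ℕ, p.Prime ∧ Odd p ∧ 0 < k ∧ q = p ^ k)
    (χ : ℤ) (hχ : χ = 1 ∨ χ = -1) (m : ℕ) (hm : (m : ℤ) = (q : ℤ) - χ)
    (p : ℕ) (hp : p.Prime) (hpodd : Odd p)
    (d : ℕ) (hdm : d ∣ m) :
    (∃ n : ℕ, 0 < n ∧ m ∣ n ^ p - 1 ∧ Nat.gcd (n - 1) m = d) ↔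
      (∀ ℓ : ℕ, ℓ.Prime → ℓ ∣ m →
        (ℓ = p → 2 ≤ padicValNat ℓ m →
          padicValNat ℓ d = padicValNat ℓ m - 1 ∨ padicValNat ℓ d = padicValNat ℓ m) ∧
        (ℓ % p = 1 → padicValNat ℓ d = 0 ∨ padicValNat ℓ d = padicValNat ℓ m) ∧
        (¬ (ℓ = p ∧ 2 ≤ padicValNat ℓ m) → ¬ (ℓ % p = 1) →
          padicValNat ℓ d = padicValNat ℓ m)) := by
  have hm0 : m ≠ 0 := by
    obtain ⟨r, k, hr, -, hk, rfl⟩ := hq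
    have : (2 : ℤ) ≤ ((r ^ k : ℕ) : ℤ) := by
      exact_mod_cast hr.two_le.trans (Nat.le_self_pow hk.ne' r)
    rcases hχ with rfl | rfl <;> omega
  rw [exists_pow_sub_one_gcd_eq_iff_forall_prime_dvd hm0 hdm]
  refine forall_congr' fun ℓ => forall_congr' fun hℓ => forall_congr' fun hℓm => ?_
  have := Fact.mk hℓ
  rw [exists_gcd_sub_one_eq_iff_exponent_cases hp hpodd
      (Nat.one_le_iff_ne_zero.mp (one_le_padicValNat_of_dvd hm0 hℓm))
      ((padicValNat_dvd_iff_le hm0).mp (pow_padicValNat_dvd.trans hdm)),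
    exponent_cases_iff hℓ hp]

/-- Proposition 2.6: characterization of (q, χ, p)-admissible integers for
an odd prime p. -/
theorem stmt_3 (q : ℕ) (hq : ∃ p k : ℕ, p.Prime ∧ Odd p ∧ 0 < k ∧ q = p ^ k)
    (χ : ℤ) (hχ : χ = 1 ∨ χ = -1) (m : ℕ) (hm : (m : ℤ) = (q : ℤ) - χ)
    (p : ℕ) (hp : p.Prime) (hpodd : Odd p)
    (d : ℕ) (hdm : d ∣ m) (hdne : d ≠ m) :
    (∃ n : ℕ, 0 < n ∧ m ∣ n ^ p - 1 ∧ Nat.gcd (n - 1) m = d) ↔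
      (∀ ℓ : ℕ, ℓ.Prime → ℓ ∣ m →
        (ℓ = p → 2 ≤ padicValNat ℓ m →
          padicValNat ℓ d = padicValNat ℓ m - 1 ∨ padicValNat ℓ d = padicValNat ℓ m) ∧
        (ℓ % p = 1 → padicValNat ℓ d = 0 ∨ padicValNat ℓ d = padicValNat ℓ m) ∧
        (¬ (ℓ = p ∧ 2 ≤ padicValNat ℓ m) → ¬ (ℓ % p = 1) →
          padicValNat ℓ d = padicValNat ℓ m)) :=
  stmt_3_general q hq χ hχ m hm p hp hpodd d hdm
end

section
/- Let p be an odd prime and let d be a proper divisor of m such that for every prime ℓ dividing m, writing α = ν_ℓ(m) and β = ν_ℓ(d): β ∈ {α−1, α} if ℓ = p and α ≥ 2; β ∈ {0, α} if ℓ ≡ 1 (mod p); and β = α in all other cases. Let u be the number of primes ℓ such that ℓ ≡ 1 (mod p), ℓ divides m, and ℓ does not divide d. Then the number of integers n with 1 ≤ n ≤ m such that m divides n^p − 1 and gcd(n−1, m) = d equals (p−1)^u if ν_p(d) = ν_p(m), and equals (p−1)^(u+1) if ν_p(m) = ν_p(d) + 1. -/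
/-!
Writing `n = x + 1`, we count residues `x` modulo `m` with `(x + 1) ^ p = 1` and
`gcd x m = d`. By the Chinese remainder theorem this count is multiplicative over the
prime-power factors `ℓ ^ α ∥ m`, the local condition being `gcd x ℓ^α = ℓ^β` with
`β = ν_ℓ d`. Locally there are three cases. If `β = α`, only `x = 0` counts. If `ℓ = p` and
`β = α - 1 ≥ 1`, every `x` with `gcd x p^α = p^(α-1)` is a root, since
`(1 + p^(α-1) w) ^ p = 1` modulo `p ^ α`; there are `φ p = p - 1` of them. If `ℓ ≡ 1 (mod p)`
and `β = 0`, the admissible `x + 1` are exactly the elements of order `p` of the cyclic group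
`(ZMod ℓ^α)ˣ`: a root `≡ 1 (mod ℓ)` has order dividing both `p` and `ℓ ^ (α - 1)`, hence is `1`.
Again there are `φ p = p - 1` of them.
-/

open Finset

namespace Redei

theorem card_subtype_val {n : ℕ} [NeZero n] (P : ℕ → Prop) [DecidablePred P] :
    Nat.card {x : ZMod n // P x.val} = #{k ∈ range n | P k} := by
  rw [Nat.card_eq_fintype_card, Fintype.card_subtype]
  refine card_nbij' ZMod.val (fun k => (k : ZMod n)) ?_ ?_ ?_ ?_
  · intro x hx
    simpa [ZMod.val_lt] using hx
  · intro k hk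
    simp only [coe_filter, mem_range] at hk
    simpa [ZMod.val_cast_of_lt hk.1] using hk.2
  · intro x _
    exact ZMod.natCast_zmod_val x
  · intro k hk
    simp only [coe_filter, mem_range] at hk
    exact ZMod.val_cast_of_lt hk.1

theorem card_gcd_val_eq_totient {n D : ℕ} [NeZero n] (hD : D ∣ n) :
    Nat.card {x : ZMod n // x.val.gcd n = D} = Nat.totient (n / D) := by
  rw [card_subtype_val (fun k => k.gcd n = D), Nat.totient_div_of_dvd hD]
  simp_rw [Nat.gcd_comm]

theorem add_one_pow_eq_one_iff {M p : ℕ} [NeZero M] (x : ZMod M) :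
    (x + 1) ^ p = 1 ↔ M ∣ (x.val + 1) ^ p - 1 := by
  rw [← ZMod.natCast_eq_zero_iff, Nat.cast_sub (Nat.one_le_pow _ _ (Nat.succ_pos _)),
    sub_eq_zero]
  push_cast
  rw [ZMod.natCast_zmod_val]

theorem gcd_val_cast {M N : ℕ} [NeZero N] (x : ZMod N) :
    (x.cast : ZMod M).val.gcd M = x.val.gcd M := by
  rw [← ZMod.natCast_val, ZMod.val_natCast, ← Nat.gcd_rec, Nat.gcd_comm]

theorem gcd_mul_eq_gcd_mul_iff {M N : ℕ} (h : M.Coprime N) (a b : ℕ) :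
    a.gcd (M * N) = b.gcd (M * N) ↔ a.gcd M = b.gcd M ∧ a.gcd N = b.gcd N := by
  refine ⟨fun hab => ⟨?_, ?_⟩, fun ⟨hM, hN⟩ => by rw [h.gcd_mul, h.gcd_mul, hM, hN]⟩
  · rw [← Nat.gcd_eq_right (dvd_mul_right M N), ← Nat.gcd_assoc, ← Nat.gcd_assoc, hab]
  · rw [← Nat.gcd_eq_right (dvd_mul_left N M), ← Nat.gcd_assoc, ← Nat.gcd_assoc, hab]

theorem gcd_prime_pow_eq {ℓ d α : ℕ} (hℓ : ℓ.Prime) (hd : d ≠ 0) (h : padicValNat ℓ d ≤ α) :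
    d.gcd (ℓ ^ α) = ℓ ^ padicValNat ℓ d := by
  rw [← Nat.factorization_def d hℓ] at h ⊢
  obtain ⟨k, rfl⟩ := Nat.exists_eq_add_of_le h
  calc d.gcd (ℓ ^ (d.factorization ℓ + k))
      = (ℓ ^ d.factorization ℓ * (d / ℓ ^ d.factorization ℓ)).gcd
          (ℓ ^ d.factorization ℓ * ℓ ^ k) := by rw [Nat.ordProj_mul_ordCompl_eq_self, pow_add]
    _ = ℓ ^ d.factorization ℓ := by
      rw [Nat.gcd_mul_left, ((Nat.coprime_ordCompl hℓ hd).symm.pow_right k).gcd_eq_one, mul_one]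

theorem card_units_orderOf_eq {M : Type*} [Monoid M] {n : ℕ} (hn : n ≠ 0) :
    Nat.card {u : Mˣ // orderOf u = n} = Nat.card {x : M // orderOf x = n} := by
  refine Nat.card_congr
    { toFun u := ⟨u.1, by rw [orderOf_units]; exact u.2⟩
      invFun x :=
        ⟨(IsUnit.of_pow_eq_one (pow_orderOf_eq_one x.1) (by rw [x.2]; exact hn)).unit, by
          rw [← orderOf_units, IsUnit.unit_spec]; exact x.2⟩
      left_inv u := by ext; simp
      right_inv x := by ext; simp }

theorem one_add_prime_pow_mul_pow_eq_one {ℓ k n α : ℕ} (hℓ : ℓ.Prime) (hk : k ≠ 0)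
    (hα : α ≤ n + k) (w : ZMod (ℓ ^ α)) : (1 + ℓ ^ k * w) ^ ℓ ^ n = 1 := by
  have hdvd : (ℓ : ZMod (ℓ ^ α)) * ℓ ^ k * 1 ∣ (ℓ ^ k) ^ ℓ := by
    rw [mul_one, ← pow_succ', ← pow_mul]
    exact pow_dvd_pow _ (by nlinarith [hℓ.two_le, Nat.pos_of_ne_zero hk])
  have hzero : (ℓ : ZMod (ℓ ^ α)) ^ (n + k) = 0 := by
    rw [← Nat.cast_pow, ZMod.natCast_eq_zero_iff]
    exact pow_dvd_pow ℓ hα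
  obtain ⟨y, hy⟩ := ZMod.exists_one_add_mul_pow_prime_pow_eq hℓ (one_dvd _) hdvd w n
  rw [hy, ← pow_add, hzero, zero_mul, add_zero]

theorem eq_zero_of_add_one_pow_eq_one {ℓ p α : ℕ} (hℓ : ℓ.Prime) (hp : p.Prime) (hℓp : ℓ ≠ p)
    {x : ZMod (ℓ ^ α)} (hx : ℓ ∣ x.val) (h : (x + 1) ^ p = 1) : x = 0 := by
  have := NeZero.mk (pow_ne_zero α hℓ.ne_zero)
  obtain ⟨c, hc⟩ := hx
  have hℓpow : (x + 1) ^ ℓ ^ (α - 1) = 1 := by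
    have h := one_add_prime_pow_mul_pow_eq_one (k := 1) (n := α - 1) hℓ one_ne_zero (by omega)
      (c : ZMod (ℓ ^ α))
    rw [pow_one] at h
    rw [← ZMod.natCast_zmod_val x, hc, add_comm]
    push_cast
    exact h
  have hcop : p.Coprime (ℓ ^ (α - 1)) := ((Nat.coprime_primes hp hℓ).mpr hℓp.symm).pow_right _
  have := Nat.eq_one_of_dvd_coprimes hcop (orderOf_dvd_of_pow_eq_one h)
    (orderOf_dvd_of_pow_eq_one hℓpow)
  rwa [orderOf_eq_one_iff, add_eq_right] at this

/-- Residues `x = n - 1` modulo `M` with `n ^ p = 1` and `gcd (n - 1) M = D`. -/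
noncomputable def rootCount (p M D : ℕ) : ℕ :=
  Nat.card {x : ZMod M // (x + 1) ^ p = 1 ∧ x.val.gcd M = D}

theorem card_filter_Icc_eq_rootCount {p M D : ℕ} [NeZero M] :
    #{n ∈ Icc 1 M | M ∣ n ^ p - 1 ∧ (n - 1).gcd M = D} = rootCount p M D := by
  have hIcc : Icc 1 M = (range M).map (addRightEmbedding 1) := by
    rw [range_eq_Ico, map_add_right_Ico, zero_add, Ico_add_one_right_eq_Icc]
  simp_rw [rootCount, add_one_pow_eq_one_iff]
  rw [card_subtype_val (fun k => M ∣ (k + 1) ^ p - 1 ∧ k.gcd M = D), hIcc, filter_map, card_map]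
  simp

theorem rootCount_self {p M : ℕ} [NeZero M] : rootCount p M M = 1 := by
  rw [rootCount, Nat.card_eq_one_iff_unique]
  refine ⟨⟨fun x y => Subtype.ext ?_⟩, ⟨⟨0, by simp⟩⟩⟩
  have key : ∀ z : {x : ZMod M // (x + 1) ^ p = 1 ∧ x.val.gcd M = M}, z.1 = 0 := by
    rintro ⟨z, -, hz⟩
    rw [← ZMod.val_eq_zero]
    exact Nat.eq_zero_of_dvd_of_lt (Nat.gcd_eq_right_iff_dvd.mp hz) (ZMod.val_lt z)
  rw [key x, key y]

theorem rootCount_mul {p M N : ℕ} [NeZero M] [NeZero N] (h : M.Coprime N) (d : ℕ) :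
    rootCount p (M * N) (d.gcd (M * N)) = rootCount p M (d.gcd M) * rootCount p N (d.gcd N) := by
  rw [rootCount, rootCount, rootCount, ← Nat.card_prod]
  refine Nat.card_congr (((ZMod.chineseRemainder h).toEquiv.subtypeEquiv fun x => ?_).trans
    Equiv.subtypeProdEquivProd)
  have he : ZMod.chineseRemainder h x = (x.cast, x.cast) :=
    Prod.ext (Prod.fst_zmod_cast x) (Prod.snd_zmod_cast x)
  have hpow : (x + 1) ^ p = 1 ↔
      ((x.cast : ZMod M) + 1) ^ p = 1 ∧ ((x.cast : ZMod N) + 1) ^ p = 1 := by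
    rw [← (ZMod.chineseRemainder h).injective.eq_iff, map_pow, map_add, map_one, he,
      Prod.ext_iff]
    simp
  simp only [RingEquiv.toEquiv_eq_coe, EquivLike.coe_coe, he]
  rw [hpow, gcd_val_cast, gcd_val_cast, gcd_mul_eq_gcd_mul_iff h]
  tauto

theorem rootCount_eq_prod {p m : ℕ} (d : ℕ) (hm : m ≠ 0) :
    rootCount p m (d.gcd m) = ∏ ℓ ∈ m.primeFactors,
      rootCount p (ℓ ^ padicValNat ℓ m) (d.gcd (ℓ ^ padicValNat ℓ m)) := by
  have hone : rootCount p 1 (d.gcd 1) = 1 := by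
    rw [Nat.gcd_one_right]
    exact rootCount_self
  rw [Nat.multiplicative_factorization (fun M => rootCount p M (d.gcd M)) ?_ hone hm,
    Finsupp.prod, Nat.support_factorization]
  · refine prod_congr rfl fun ℓ hℓ => ?_
    rw [Nat.factorization_def m (Nat.prime_of_mem_primeFactors hℓ)]
  · intro M N h
    rcases eq_or_ne M 0 with rfl | hM
    · rw [(Nat.coprime_zero_left N).mp h, mul_one, hone, mul_one]
    rcases eq_or_ne N 0 with rfl | hN
    · rw [(Nat.coprime_zero_right M).mp h, one_mul, hone, one_mul]
    have := NeZero.mk hM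
    have := NeZero.mk hN
    exact rootCount_mul h d

theorem rootCount_prime_pow_pred {p α : ℕ} (hp : p.Prime) (hα : 2 ≤ α) :
    rootCount p (p ^ α) (p ^ (α - 1)) = p - 1 := by
  have := NeZero.mk (pow_ne_zero α hp.ne_zero)
  have hroot (x : ZMod (p ^ α)) (hx : x.val.gcd (p ^ α) = p ^ (α - 1)) : (x + 1) ^ p = 1 := by
    obtain ⟨c, hc⟩ : p ^ (α - 1) ∣ x.val := hx ▸ Nat.gcd_dvd_left _ _
    have h := one_add_prime_pow_mul_pow_eq_one (k := α - 1) (n := 1) hp (by omega) (by omega)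
      (c : ZMod (p ^ α))
    rw [pow_one] at h
    rw [← ZMod.natCast_zmod_val x, hc, add_comm]
    push_cast
    exact h
  rw [rootCount, Nat.card_congr (Equiv.subtypeEquivRight fun x =>
      ⟨And.right, fun hx => ⟨hroot x hx, hx⟩⟩),
    card_gcd_val_eq_totient (pow_dvd_pow p (Nat.sub_le α 1)),
    Nat.pow_div (Nat.sub_le α 1) hp.pos, Nat.sub_sub_self (by omega), pow_one,
    Nat.totient_prime hp]

theorem rootCount_prime_pow_one {p ℓ α : ℕ} (hp : p.Prime) (hℓ : ℓ.Prime) (hℓp : ℓ % p = 1)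
    (hα : α ≠ 0) : rootCount p (ℓ ^ α) 1 = p - 1 := by
  have := Fact.mk hp
  have := NeZero.mk (pow_ne_zero α hℓ.ne_zero)
  have hpdvd : p ∣ ℓ - 1 := hℓp ▸ Nat.dvd_sub_mod ℓ
  have hℓ2 : ℓ ≠ 2 := by
    rintro rfl
    exact hp.one_lt.ne' (Nat.dvd_one.mp hpdvd)
  have hℓp' : ℓ ≠ p := by
    rintro rfl
    simp at hℓp
  have key (x : ZMod (ℓ ^ α)) : (x + 1) ^ p = 1 ∧ x.val.gcd (ℓ ^ α) = 1 ↔ orderOf (x + 1) = p := by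
    constructor
    · rintro ⟨hpow, hgcd⟩
      refine orderOf_eq_prime hpow fun h1 => ?_
      rw [add_eq_right.mp h1, ZMod.val_zero, Nat.gcd_zero_left] at hgcd
      exact (Nat.one_lt_pow hα hℓ.one_lt).ne' hgcd
    · intro hord
      have hpow : (x + 1) ^ p = 1 := hord ▸ pow_orderOf_eq_one _
      refine ⟨hpow, Nat.Coprime.pow_right _ ((Nat.coprime_comm.mp (hℓ.coprime_iff_not_dvd.mpr
        fun hdvd => ?_)))⟩
      rw [eq_zero_of_add_one_pow_eq_one hℓ hp hℓp' hdvd hpow, zero_add, orderOf_one] at hord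
      exact hp.one_lt.ne hord
  have := ZMod.isCyclic_units_of_prime_pow ℓ hℓ hℓ2 α
  rw [rootCount, Nat.card_congr (Equiv.subtypeEquivRight key),
    Nat.card_congr ((Equiv.addRight (1 : ZMod (ℓ ^ α))).subtypeEquiv
      (p := fun x => orderOf (x + 1) = p) (q := fun y => orderOf y = p) fun _ => Iff.rfl),
    ← card_units_orderOf_eq hp.ne_zero, Nat.card_eq_fintype_card, Fintype.card_subtype,
    IsCyclic.card_orderOf_eq_totient, Nat.totient_prime hp]
  rw [ZMod.card_units_eq_totient, Nat.totient_prime_pow hℓ (Nat.pos_of_ne_zero hα)]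
  exact dvd_mul_of_dvd_right hpdvd _

def IsAdmissibleDivisor (p m d : ℕ) : Prop :=
  ∀ ℓ : ℕ, ℓ.Prime → ℓ ∣ m →
    (ℓ = p → 2 ≤ padicValNat ℓ m →
      padicValNat ℓ d = padicValNat ℓ m - 1 ∨ padicValNat ℓ d = padicValNat ℓ m) ∧
    (ℓ % p = 1 → padicValNat ℓ d = 0 ∨ padicValNat ℓ d = padicValNat ℓ m) ∧
    (¬ (ℓ = p ∧ 2 ≤ padicValNat ℓ m) → ¬ (ℓ % p = 1) →
      padicValNat ℓ d = padicValNat ℓ m)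

theorem rootCount_primeFactor_pow {p m d ℓ : ℕ} (hp : p.Prime) (hm : m ≠ 0)
    (hdm : d ∣ m) (had : IsAdmissibleDivisor p m d) (hℓ : ℓ ∈ m.primeFactors) :
    rootCount p (ℓ ^ padicValNat ℓ m) (d.gcd (ℓ ^ padicValNat ℓ m)) =
      (p - 1) ^ ((if ℓ % p = 1 ∧ ¬ ℓ ∣ d then 1 else 0) +
        (if p = ℓ then padicValNat ℓ m - padicValNat ℓ d else 0)) := by
  obtain ⟨hℓp, hℓm, -⟩ := Nat.mem_primeFactors.mp hℓ
  have := Fact.mk hℓp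
  have hd : d ≠ 0 := ne_zero_of_dvd_ne_zero hm hdm
  have hβα : padicValNat ℓ d ≤ padicValNat ℓ m :=
    (padicValNat_dvd_iff_le hm).mp (pow_padicValNat_dvd.trans hdm)
  rw [gcd_prime_pow_eq hℓp hd hβα]
  obtain ⟨hpow, hmod, hother⟩ := had ℓ hℓp hℓm
  have hα : padicValNat ℓ m ≠ 0 := Nat.pos_iff_ne_zero.mp (one_le_padicValNat_of_dvd hm hℓm)
  have hℓd : ℓ ∣ d ↔ padicValNat ℓ d ≠ 0 := dvd_iff_padicValNat_ne_zero hd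
  have := NeZero.mk (pow_ne_zero (padicValNat ℓ m) hℓp.ne_zero)
  set α := padicValNat ℓ m
  set β := padicValNat ℓ d
  by_cases hβ : β = α
  · rw [hβ, rootCount_self, if_neg (by rw [hℓd, hβ]; tauto), Nat.sub_self]
    simp
  by_cases hℓmod : ℓ % p = 1
  · have hβ0 : β = 0 := (hmod hℓmod).resolve_right hβ
    have hpℓ : p ≠ ℓ := by
      rintro rfl
      simp at hℓmod
    rw [hβ0, pow_zero, rootCount_prime_pow_one hp hℓp hℓmod hα,
      if_pos ⟨hℓmod, by rw [hℓd, hβ0]; tauto⟩, if_neg hpℓ, pow_one]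
  · obtain ⟨rfl, h2α⟩ : ℓ = p ∧ 2 ≤ α := by
      by_contra h
      exact hβ (hother h hℓmod)
    rw [(hpow rfl h2α).resolve_right hβ, rootCount_prime_pow_pred hp h2α, if_neg (by simp),
      if_pos rfl, zero_add, Nat.sub_sub_self (by omega), pow_one]

theorem rootCount_eq_pow {p m d : ℕ} (hp : p.Prime) (hm : m ≠ 0) (hdm : d ∣ m)
    (had : IsAdmissibleDivisor p m d) :
    rootCount p m d = (p - 1) ^ (#{ℓ ∈ m.primeFactors | ℓ % p = 1 ∧ ¬ ℓ ∣ d} +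
      (padicValNat p m - padicValNat p d)) := by
  conv_lhs => rw [← Nat.gcd_eq_left hdm]
  rw [rootCount_eq_prod d hm,
    prod_congr rfl fun ℓ hℓ => rootCount_primeFactor_pow hp hm hdm had hℓ,
    prod_pow_eq_pow_sum, sum_add_distrib, sum_boole, sum_ite_eq, Nat.cast_id]
  congr 2
  split_ifs with hpm
  · rfl
  · rw [padicValNat.eq_zero_of_not_dvd fun h => hpm (Nat.mem_primeFactors.mpr ⟨hp, h, hm⟩),
      Nat.zero_sub]

end Redei

theorem stmt_5_general (q : ℕ) (hq : ∃ p' k : ℕ, p'.Prime ∧ Odd p' ∧ 0 < k ∧ q = p' ^ k)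
    (χ : ℤ) (hχ : χ = 1 ∨ χ = -1) (m : ℕ) (hm : (m : ℤ) = (q : ℤ) - χ)
    (p : ℕ) (hp : p.Prime)
    (d : ℕ) (hdm : d ∣ m)
    (hval : ∀ ℓ : ℕ, ℓ.Prime → ℓ ∣ m →
      (ℓ = p → 2 ≤ padicValNat ℓ m →
        padicValNat ℓ d = padicValNat ℓ m - 1 ∨ padicValNat ℓ d = padicValNat ℓ m) ∧
      (ℓ % p = 1 → padicValNat ℓ d = 0 ∨ padicValNat ℓ d = padicValNat ℓ m) ∧
      (¬ (ℓ = p ∧ 2 ≤ padicValNat ℓ m) → ¬ (ℓ % p = 1) →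
        padicValNat ℓ d = padicValNat ℓ m))
    (u : ℕ)
    (hu : u = (m.primeFactors.filter (fun ℓ => ℓ % p = 1 ∧ ¬ ℓ ∣ d)).card) :
    (padicValNat p d = padicValNat p m →
      ((Finset.Icc 1 m).filter
        (fun n => m ∣ n ^ p - 1 ∧ Nat.gcd (n - 1) m = d)).card = (p - 1) ^ u) ∧
    (padicValNat p m = padicValNat p d + 1 →
      ((Finset.Icc 1 m).filter
        (fun n => m ∣ n ^ p - 1 ∧ Nat.gcd (n - 1) m = d)).card = (p - 1) ^ (u + 1)) := by
  have hq2 : 2 ≤ q := by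
    obtain ⟨p', k, hp', -, hk, rfl⟩ := hq
    exact Nat.one_lt_pow hk.ne' hp'.one_lt
  have hm0 : m ≠ 0 := by
    rcases hχ with rfl | rfl <;> omega
  have := NeZero.mk hm0
  rw [Redei.card_filter_Icc_eq_rootCount, Redei.rootCount_eq_pow hp hm0 hdm hval, ← hu]
  exact ⟨fun h => by rw [h, Nat.sub_self, add_zero], fun h => by rw [h, Nat.add_sub_cancel_left]⟩

/-- Proposition 2.8: the number of Rédei permutations with d + χ + 1 fixed
points and p-cycles, for p an odd prime. -/
theorem stmt_5 (q : ℕ) (hq : ∃ p' k : ℕ, p'.Prime ∧ Odd p' ∧ 0 < k ∧ q = p' ^ k)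
    (χ : ℤ) (hχ : χ = 1 ∨ χ = -1) (m : ℕ) (hm : (m : ℤ) = (q : ℤ) - χ)
    (p : ℕ) (hp : p.Prime) (hpodd : Odd p)
    (d : ℕ) (hdm : d ∣ m) (hdne : d ≠ m)
    (hval : ∀ ℓ : ℕ, ℓ.Prime → ℓ ∣ m →
      (ℓ = p → 2 ≤ padicValNat ℓ m →
        padicValNat ℓ d = padicValNat ℓ m - 1 ∨ padicValNat ℓ d = padicValNat ℓ m) ∧
      (ℓ % p = 1 → padicValNat ℓ d = 0 ∨ padicValNat ℓ d = padicValNat ℓ m) ∧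
      (¬ (ℓ = p ∧ 2 ≤ padicValNat ℓ m) → ¬ (ℓ % p = 1) →
        padicValNat ℓ d = padicValNat ℓ m))
    (u : ℕ)
    (hu : u = (m.primeFactors.filter (fun ℓ => ℓ % p = 1 ∧ ¬ ℓ ∣ d)).card) :
    (padicValNat p d = padicValNat p m →
      ((Finset.Icc 1 m).filter
        (fun n => m ∣ n ^ p - 1 ∧ Nat.gcd (n - 1) m = d)).card = (p - 1) ^ u) ∧
    (padicValNat p m = padicValNat p d + 1 →
      ((Finset.Icc 1 m).filter
        (fun n => m ∣ n ^ p - 1 ∧ Nat.gcd (n - 1) m = d)).card = (p - 1) ^ (u + 1)) :=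
  stmt_5_general q hq χ hχ m hm p hp d hdm hval u hu
end

section
/- Let p be an odd prime and let r be the number of primes ℓ such that ℓ ≡ 1 (mod p) and ℓ divides m. Then the number of integers n with 2 ≤ n ≤ m such that m divides n^p − 1 equals p^r − 1 if p² does not divide m, and equals p^(r+1) − 1 if p² divides m. -/
/-!
Apart from `x = 1`, the solutions of `x ^ p = 1` in `ZMod m` are exactly the residues of the
integers counted. By the Chinese remainder theorem their number is multiplicative in `m`. For
a prime power `ℓ ^ e` the unit group of `ZMod (ℓ ^ e)` is cyclic (`ℓ` odd) or a `2`-group, so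
the number is `gcd (φ (ℓ ^ e)) p`; it is `p` exactly when `ℓ ≡ 1 [MOD p]`, or `ℓ = p` and
`e ≥ 2`.
-/

open Finset

theorem Nat.dvd_sub_one_iff_mod_eq_one {n a : ℕ} (hn : 1 < n) (ha : 1 ≤ a) :
    n ∣ a - 1 ↔ a % n = 1 := by
  rw [← Nat.modEq_iff_dvd' ha, Nat.ModEq, Nat.mod_eq_of_lt hn, eq_comm]

theorem Nat.Prime.gcd_eq_ite {p : ℕ} (hp : p.Prime) (n : ℕ) [Decidable (p ∣ n)] :
    n.gcd p = if p ∣ n then p else 1 := by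
  split_ifs with h
  · exact Nat.gcd_eq_right h
  · exact (hp.coprime_iff_not_dvd.mpr h).symm.gcd_eq_one

theorem Nat.Prime.dvd_totient_prime_pow_iff {p ℓ e : ℕ} (hp : p.Prime) (hℓ : ℓ.Prime)
    (he : e ≠ 0) : p ∣ (ℓ ^ e).totient ↔ ℓ % p = 1 ∨ (ℓ = p ∧ 2 ≤ e) := by
  rw [Nat.totient_prime_pow hℓ (Nat.pos_of_ne_zero he), hp.dvd_mul,
    Nat.dvd_sub_one_iff_mod_eq_one hp.one_lt hℓ.one_le, or_comm]
  refine or_congr_right ⟨fun h => ?_, ?_⟩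
  · have hpℓ := (Nat.prime_dvd_prime_iff_eq hp hℓ).mp (hp.dvd_of_dvd_pow h)
    refine ⟨hpℓ.symm, ?_⟩
    by_contra! he2
    rw [show e - 1 = 0 by omega, pow_zero] at h
    exact hp.one_lt.ne' (Nat.dvd_one.mp h)
  · rintro ⟨rfl, he2⟩
    exact dvd_pow_self ℓ (by omega)

theorem card_primeFactors_filter_dvd_totient {p m : ℕ} (hp : p.Prime) (hm : m ≠ 0) :
    #{ℓ ∈ m.primeFactors | p ∣ (ℓ ^ m.factorization ℓ).totient} =
      #{ℓ ∈ m.primeFactors | ℓ % p = 1} + if p ^ 2 ∣ m then 1 else 0 := by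
  classical
  have hiff : ∀ ℓ ∈ m.primeFactors, p ∣ (ℓ ^ m.factorization ℓ).totient ↔
      ℓ % p = 1 ∨ (ℓ = p ∧ p ^ 2 ∣ m) := by
    intro ℓ hℓ
    have hℓ' := Nat.prime_of_mem_primeFactors hℓ
    rw [hp.dvd_totient_prime_pow_iff hℓ'
      (hℓ'.factorization_pos_of_dvd hm (Nat.dvd_of_mem_primeFactors hℓ)).ne']
    exact or_congr_right (and_congr_right fun h => by rw [h, hp.pow_dvd_iff_le_factorization hm])
  have hdisj : Disjoint {ℓ ∈ m.primeFactors | ℓ % p = 1}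
      {ℓ ∈ m.primeFactors | ℓ = p ∧ p ^ 2 ∣ m} := by
    refine disjoint_filter.mpr fun ℓ _ h1 h2 => ?_
    rw [h2.1, Nat.mod_self] at h1
    exact zero_ne_one h1
  rw [filter_congr hiff, filter_or, card_union_of_disjoint hdisj]
  congr 1
  split_ifs with h
  · have hpm : p ∈ m.primeFactors :=
      Nat.mem_primeFactors.mpr ⟨hp, (dvd_pow_self p two_ne_zero).trans h, hm⟩
    simp [h, filter_eq', hpm]
  · simp [h]

def rootsOfUnityEquivPowEqOne (k : ℕ) [NeZero k] (M : Type*) [CommMonoid M] :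
    rootsOfUnity k M ≃ {x : M // x ^ k = 1} where
  toFun ζ := ⟨ζ.1, (mem_rootsOfUnity' k _).mp ζ.2⟩
  invFun x := rootsOfUnity.mkOfPowEq x.1 x.2
  left_inv _ := rootsOfUnity.coe_injective rfl
  right_inv _ := rfl

theorem card_rootsOfUnity_prod (k : ℕ) (M N : Type*) [CommMonoid M] [CommMonoid N] :
    Nat.card (rootsOfUnity k (M × N)) =
      Nat.card (rootsOfUnity k M) * Nat.card (rootsOfUnity k N) := by
  rw [← Nat.card_prod]
  refine Nat.card_congr ((MulEquiv.prodUnits.toEquiv.subtypeEquiv fun u => ?_).trans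
    (Equiv.subtypeProdEquivProd (p := (· ∈ rootsOfUnity k M)) (q := (· ∈ rootsOfUnity k N))))
  simp only [mem_rootsOfUnity, MulEquiv.toEquiv_eq_coe, EquivLike.coe_coe]
  rw [← (MulEquiv.prodUnits (M := M) (N := N)).injective.eq_iff, map_pow, map_one, Prod.ext_iff]
  rfl

theorem card_rootsOfUnity_of_isCyclic (k : ℕ) (M : Type*) [CommMonoid M] [IsCyclic Mˣ]
    [Finite Mˣ] : Nat.card (rootsOfUnity k M) = (Nat.card Mˣ).gcd k := by
  rw [rootsOfUnity_eq_ker]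
  exact IsCyclic.card_powMonoidHom_ker _ k

theorem card_rootsOfUnity_of_coprime {k : ℕ} (M : Type*) [CommMonoid M]
    (h : (Nat.card Mˣ).Coprime k) : Nat.card (rootsOfUnity k M) = 1 := by
  rw [Nat.card_eq_one_iff_unique]
  refine ⟨⟨fun ζ η => Subtype.ext ((powCoprime h).injective ?_)⟩, ⟨1⟩⟩
  simp [powCoprime, (mem_rootsOfUnity _ _).mp ζ.2, (mem_rootsOfUnity _ _).mp η.2]

namespace ZMod

theorem card_rootsOfUnity_mul (k : ℕ) {a b : ℕ} (h : a.Coprime b) :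
    Nat.card (rootsOfUnity k (ZMod (a * b))) =
      Nat.card (rootsOfUnity k (ZMod a)) * Nat.card (rootsOfUnity k (ZMod b)) := by
  rw [← card_rootsOfUnity_prod, Nat.card_congr
    ((chineseRemainder h).toMulEquiv.restrictRootsOfUnity k).toEquiv]

theorem card_rootsOfUnity_prime_pow {k ℓ : ℕ} (hk : Odd k) (hℓ : ℓ.Prime) (e : ℕ) :
    Nat.card (rootsOfUnity k (ZMod (ℓ ^ e))) = (ℓ ^ e).totient.gcd k := by
  have : NeZero (ℓ ^ e) := ⟨pow_ne_zero e hℓ.ne_zero⟩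
  have hcard : Nat.card (ZMod (ℓ ^ e))ˣ = (ℓ ^ e).totient := by
    rw [Nat.card_eq_fintype_card, card_units_eq_totient]
  rcases eq_or_ne ℓ 2 with rfl | hℓ2
  · have hcop : (2 ^ e).totient.Coprime k := by
      rcases e with _ | e
      · simp
      · rw [Nat.totient_prime_pow_succ Nat.prime_two, Nat.add_one_sub_one, mul_one]
        exact (Nat.coprime_two_left.mpr hk).pow_left e
    rw [card_rootsOfUnity_of_coprime _ (hcard ▸ hcop), hcop.gcd_eq_one]
  · have := isCyclic_units_of_prime_pow ℓ hℓ hℓ2 e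
    rw [card_rootsOfUnity_of_isCyclic, hcard]

theorem card_rootsOfUnity_eq_prod {k m : ℕ} (hk : Odd k) (hm : m ≠ 0) :
    Nat.card (rootsOfUnity k (ZMod m)) =
      ∏ ℓ ∈ m.primeFactors, (ℓ ^ m.factorization ℓ).totient.gcd k := by
  rw [Nat.multiplicative_factorization (fun n => Nat.card (rootsOfUnity k (ZMod n)))
      (fun _ _ => card_rootsOfUnity_mul k)
      (Nat.card_eq_one_iff_unique.mpr ⟨inferInstance, ⟨1⟩⟩) hm,
    Finsupp.prod, Nat.support_factorization]
  exact prod_congr rfl fun ℓ hℓ =>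
    card_rootsOfUnity_prime_pow hk (Nat.prime_of_mem_primeFactors hℓ) _

theorem card_rootsOfUnity_prime {p m : ℕ} (hp : p.Prime) (hodd : Odd p) (hm : m ≠ 0) :
    Nat.card (rootsOfUnity p (ZMod m)) =
      p ^ #{ℓ ∈ m.primeFactors | p ∣ (ℓ ^ m.factorization ℓ).totient} := by
  classical
  simp_rw [card_rootsOfUnity_eq_prod hodd hm, hp.gcd_eq_ite, ← prod_filter, prod_const]

theorem natCast_pow_eq_one_iff_dvd {m n k : ℕ} (hn : n ≠ 0) :
    (n : ZMod m) ^ k = 1 ↔ m ∣ n ^ k - 1 := by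
  rw [← Nat.cast_pow, ← Nat.cast_one, natCast_eq_natCast_iff, Nat.ModEq.comm,
    Nat.modEq_iff_dvd' (Nat.one_le_pow _ _ (Nat.pos_of_ne_zero hn))]

theorem card_filter_range_natCast (m : ℕ) [NeZero m] (P : ZMod m → Prop) [DecidablePred P] :
    #{n ∈ range m | P ((n : ℕ) : ZMod m)} = #{x | P x} := by
  refine card_nbij' (fun n => (n : ZMod m)) val ?_ ?_ ?_ ?_
  · intro n hn
    simp_all
  · intro x hx
    simp_all [val_lt]
  · intro n hn
    simp_all [Nat.mod_eq_of_lt]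
  · intro x _
    simp

end ZMod

theorem filter_Icc_dvd_pow_sub_one {m k : ℕ} (hm : 2 ≤ m) (hk : k ≠ 0) :
    {n ∈ Icc 2 m | m ∣ n ^ k - 1} = {n ∈ range m | ((n : ℕ) : ZMod m) ^ k = 1}.erase 1 := by
  have : Fact (1 < m) := ⟨hm⟩
  ext n
  simp only [mem_filter, mem_Icc, mem_erase, mem_range]
  rcases Nat.eq_zero_or_pos n with rfl | hn
  · simp [zero_pow hk]
  rcases eq_or_ne n m with rfl | hnm
  · rw [← ZMod.natCast_pow_eq_one_iff_dvd hn.ne', ZMod.natCast_self, zero_pow hk]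
    simp
  · rw [ZMod.natCast_pow_eq_one_iff_dvd hn.ne']
    omega

theorem card_filter_Icc_dvd_pow_sub_one {m k : ℕ} (hm : 2 ≤ m) (hk : k ≠ 0) :
    #{n ∈ Icc 2 m | m ∣ n ^ k - 1} = Nat.card (rootsOfUnity k (ZMod m)) - 1 := by
  have : NeZero m := ⟨by omega⟩
  have : NeZero k := ⟨hk⟩
  rw [filter_Icc_dvd_pow_sub_one hm hk, card_erase_of_mem (by simp; omega),
    ZMod.card_filter_range_natCast m (· ^ k = 1), Nat.card_congr (rootsOfUnityEquivPowEqOne k _),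
    Nat.card_eq_fintype_card, Fintype.card_subtype]

/-- Proposition 2.9: the total number of Rédei permutations (other than the
identity) with 1- and p-cycles, for p an odd prime. -/
theorem stmt_6 (q : ℕ) (hq : ∃ p' k : ℕ, p'.Prime ∧ Odd p' ∧ 0 < k ∧ q = p' ^ k)
    (χ : ℤ) (hχ : χ = 1 ∨ χ = -1) (m : ℕ) (hm : (m : ℤ) = (q : ℤ) - χ)
    (p : ℕ) (hp : p.Prime) (hpodd : Odd p)
    (r : ℕ) (hr : r = (m.primeFactors.filter (fun ℓ => ℓ % p = 1)).card) :
    (¬ p ^ 2 ∣ m →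
      ((Finset.Icc 2 m).filter (fun n => m ∣ n ^ p - 1)).card = p ^ r - 1) ∧
    (p ^ 2 ∣ m →
      ((Finset.Icc 2 m).filter (fun n => m ∣ n ^ p - 1)).card = p ^ (r + 1) - 1) := by
  obtain ⟨p', k, hp', hp'odd, hk, rfl⟩ := hq
  have hp'3 : 3 ≤ p' := by
    obtain ⟨t, rfl⟩ := hp'odd
    have := hp'.two_le
    omega
  have hq3 : 3 ≤ p' ^ k := hp'3.trans (Nat.le_self_pow hk.ne' p')
  have hm2 : 2 ≤ m := by rcases hχ with rfl | rfl <;> omega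
  have hcount := card_filter_Icc_dvd_pow_sub_one hm2 hp.ne_zero
  rw [ZMod.card_rootsOfUnity_prime hp hpodd (by omega),
    card_primeFactors_filter_dvd_totient hp (by omega), ← hr] at hcount
  exact ⟨fun h => by rw [hcount, if_neg h, add_zero], fun h => by rw [hcount, if_pos h]⟩
end

section
/- Let d be a proper divisor of m. Then there exists a positive integer n such that m divides n² − 1 and gcd(n−1, m) = d, if and only if d is even, ν₂(d) ∈ {1, ν₂(m) − 1, ν₂(m)}, and gcd(d, m/d) divides 2. -/
/-!
If `m ∣ n² - 1` and `d = gcd (n - 1) m`, then `d ∣ n - 1` and `m / d ∣ n + 1`, so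
`gcd d (m / d)` divides `gcd (n - 1) (n + 1) ∣ 2`. Conversely, when `d` is even and
`gcd d (m / d) ∣ 2`, the Chinese remainder theorem gives `n ≡ d + 1 (mod 2d)` and
`n ≡ -1 (mod m / d)`; then `n - 1 = d u` with `u` odd, and `gcd u (m / d)` divides `2` and `u`,
so `gcd (n - 1) m = d`. The condition on `ν₂ d` is automatic: `2 ^ min (ν₂ d) (ν₂ (m / d))`
divides `gcd d (m / d) ∣ 2`.
-/

namespace Nat

lemma sq_sub_one_eq_mul (n : ℕ) : n ^ 2 - 1 = (n + 1) * (n - 1) := by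
  simpa using Nat.sq_sub_sq n 1

lemma two_dvd_sub_one_of_two_dvd_sq_sub_one {n : ℕ} (h : 2 ∣ n ^ 2 - 1) : 2 ∣ n - 1 := by
  rw [sq_sub_one_eq_mul] at h
  rcases prime_two.dvd_mul.mp h with h | h <;> omega

lemma gcd_dvd_two_of_dvd_sub_one_of_dvd_add_one {a b n : ℕ} (ha : a ∣ n - 1)
    (hb : b ∣ n + 1) : gcd a b ∣ 2 := by
  have h := Nat.dvd_sub ((gcd_dvd_right a b).trans hb) ((gcd_dvd_left a b).trans ha)
  rcases n with _ | n
  · exact h.trans (by norm_num)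
  · simpa [show n + 1 + 1 - n = 2 by omega] using h

lemma coprime_of_gcd_dvd_two_of_odd {a b : ℕ} (hg : gcd a b ∣ 2) (ha : Odd a) : Coprime a b := by
  rcases (dvd_prime prime_two).mp hg with h | h
  · exact h
  · exact absurd (h ▸ gcd_dvd_left a b) ha.not_two_dvd_nat

lemma div_gcd_sub_one_dvd_add_one {m n : ℕ} (hm : m ≠ 0) (hmn : m ∣ n ^ 2 - 1) :
    m / gcd (n - 1) m ∣ n + 1 := by
  set d := gcd (n - 1) m
  have hd : 0 < d := gcd_pos_of_pos_right _ (pos_of_ne_zero hm)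
  have hcop : Coprime (m / d) ((n - 1) / d) := (coprime_div_gcd_div_gcd hd).symm
  refine hcop.dvd_of_dvd_mul_left (Nat.dvd_of_mul_dvd_mul_left hd ?_)
  rwa [Nat.mul_div_cancel' (gcd_dvd_right _ _), ← mul_assoc,
    Nat.mul_div_cancel' (gcd_dvd_left _ _), mul_comm, ← sq_sub_one_eq_mul]

lemma gcd_two_mul_dvd_add_two {d k : ℕ} (hd : Even d) (hg : gcd d k ∣ 2) :
    gcd (2 * d) k ∣ d + 2 := by
  have h4 : gcd (2 * d) k ∣ 2 ^ 2 := by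
    refine (dvd_gcd (gcd_dvd_left _ _) ((gcd_dvd_right _ _).trans (dvd_mul_left k 2))).trans ?_
    rw [gcd_mul_left, pow_two]
    exact mul_dvd_mul_left 2 hg
  obtain ⟨i, hi, hgi⟩ := (dvd_prime_pow prime_two).mp h4
  interval_cases i
  · simp [hgi]
  · simpa [hgi] using hd.two_dvd.add (dvd_refl 2)
  · -- `4 ∣ k`, so `4 ∤ d` since `gcd d k ∣ 2`; hence `d ≡ 2 (mod 4)`
    have hk : 4 ∣ k := by simpa [hgi] using gcd_dvd_right (2 * d) k
    have hd4 : ¬ 4 ∣ d := fun h => by simpa using le_of_dvd two_pos ((dvd_gcd h hk).trans hg)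
    obtain ⟨r, rfl⟩ := hd
    rw [hgi]
    omega

lemma exists_odd_dvd_mul_add_two {d k : ℕ} (hd : Even d) (hd0 : d ≠ 0) (hk0 : k ≠ 0)
    (hg : gcd d k ∣ 2) : ∃ u, Odd u ∧ k ∣ d * u + 2 := by
  have hcompat : d + 1 ≡ k - 1 [MOD gcd (2 * d) k] := by
    refine ModEq.add_right_cancel' 1 ?_
    rw [Nat.sub_add_cancel (one_le_iff_ne_zero.mpr hk0)]
    exact (modEq_zero_iff_dvd.mpr (gcd_two_mul_dvd_add_two hd hg)).trans
      (modEq_zero_iff_dvd.mpr (gcd_dvd_right _ _)).symm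
  obtain ⟨N, hN, hNk⟩ := chineseRemainder' hcompat
  have hNmod : N % (2 * d) = d + 1 := by
    obtain ⟨r, rfl⟩ := hd
    rw [hN, Nat.mod_eq_of_lt (by omega)]
  refine ⟨2 * (N / (2 * d)) + 1, odd_two_mul_add_one _, ?_⟩
  have hN1 : d * (2 * (N / (2 * d)) + 1) + 2 = N + 1 := by
    have h := div_add_mod N (2 * d)
    rw [hNmod] at h
    linarith
  rw [hN1]
  refine modEq_zero_iff_dvd.mp ((hNk.add_right 1).trans ?_)
  rw [Nat.sub_add_cancel (one_le_iff_ne_zero.mpr hk0)]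
  exact modEq_zero_iff_dvd.mpr dvd_rfl

lemma even_and_gcd_div_dvd_two_of_dvd_sq_sub_one {m n d : ℕ} (hm : Even m) (hm0 : m ≠ 0)
    (hmn : m ∣ n ^ 2 - 1) (hd : gcd (n - 1) m = d) :
    Even d ∧ gcd d (m / d) ∣ 2 := by
  subst hd
  refine ⟨even_iff_two_dvd.mpr (dvd_gcd ?_ hm.two_dvd), ?_⟩
  · exact two_dvd_sub_one_of_two_dvd_sq_sub_one (hm.two_dvd.trans hmn)
  · exact gcd_dvd_two_of_dvd_sub_one_of_dvd_add_one (gcd_dvd_left _ _)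
      (div_gcd_sub_one_dvd_add_one hm0 hmn)

lemma exists_dvd_sq_sub_one_gcd_sub_one_eq {m d : ℕ} (hm0 : m ≠ 0) (hdm : d ∣ m) (hd : Even d)
    (hg : gcd d (m / d) ∣ 2) : ∃ n : ℕ, 0 < n ∧ m ∣ n ^ 2 - 1 ∧ gcd (n - 1) m = d := by
  obtain ⟨k, rfl⟩ := hdm
  obtain ⟨hd0, hk0⟩ := Nat.mul_ne_zero_iff.mp hm0
  rw [Nat.mul_div_cancel_left k (pos_of_ne_zero hd0)] at hg
  obtain ⟨u, hu, hku⟩ := exists_odd_dvd_mul_add_two hd hd0 hk0 hg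
  have huk : Coprime u k := coprime_of_gcd_dvd_two_of_odd
    (gcd_dvd_two_of_dvd_sub_one_of_dvd_add_one (n := d * u + 1) (by simp) hku) hu
  refine ⟨d * u + 1, by omega, ?_, ?_⟩
  · rw [sq_sub_one_eq_mul, Nat.add_sub_cancel, mul_comm d k]
    exact mul_dvd_mul hku (dvd_mul_right d u)
  · rw [Nat.add_sub_cancel, gcd_mul_left, huk, mul_one]

end Nat

lemma padicValNat_two_eq_of_gcd_div_dvd_two {m d : ℕ} (hm0 : m ≠ 0) (hdm : d ∣ m)
    (hd : Even d) (hg : Nat.gcd d (m / d) ∣ 2) :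
    padicValNat 2 d = 1 ∨ padicValNat 2 d = padicValNat 2 m - 1 ∨
      padicValNat 2 d = padicValNat 2 m := by
  have hd0 : d ≠ 0 := fun h => hm0 (Nat.eq_zero_of_zero_dvd (h ▸ hdm))
  have hd1 : 1 ≤ padicValNat 2 d := (padicValNat_dvd_iff_le hd0).mp (by simpa using hd.two_dvd)
  have hdm' : padicValNat 2 d ≤ padicValNat 2 m :=
    (padicValNat_dvd_iff_le hm0).mp (pow_padicValNat_dvd.trans hdm)
  have hmin : 2 ^ min (padicValNat 2 d) (padicValNat 2 (m / d)) ∣ 2 ^ 1 :=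
    (Nat.dvd_gcd ((pow_dvd_pow 2 (min_le_left _ _)).trans pow_padicValNat_dvd)
      ((pow_dvd_pow 2 (min_le_right _ _)).trans pow_padicValNat_dvd)).trans (by simpa using hg)
  have hmin1 := (Nat.pow_dvd_pow_iff_le_right (by norm_num)).mp hmin
  rw [padicValNat.div_of_dvd hdm] at hmin1
  omega

theorem stmt_7_general (q : ℕ) (hq : ∃ p' k : ℕ, p'.Prime ∧ Odd p' ∧ 0 < k ∧ q = p' ^ k)
    (χ : ℤ) (hχ : χ = 1 ∨ χ = -1) (m : ℕ) (hm : (m : ℤ) = (q : ℤ) - χ)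
    (d : ℕ) (hdm : d ∣ m) :
    (∃ n : ℕ, 0 < n ∧ m ∣ n ^ 2 - 1 ∧ Nat.gcd (n - 1) m = d) ↔
      (Even d ∧
        (padicValNat 2 d = 1 ∨ padicValNat 2 d = padicValNat 2 m - 1 ∨
          padicValNat 2 d = padicValNat 2 m) ∧
        Nat.gcd d (m / d) ∣ 2) := by
  obtain ⟨p, k, hp, hpodd, hk, rfl⟩ := hq
  have hq3 : 3 ≤ p ^ k := by
    have := hp.two_le
    obtain ⟨j, hj⟩ := hpodd
    exact le_trans (by omega) (Nat.le_self_pow hk.ne' p)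
  obtain ⟨j, hj⟩ := hpodd.pow (n := k)
  have hm0 : m ≠ 0 := by rcases hχ with rfl | rfl <;> omega
  have hme : Even m := Nat.even_iff.mpr (by rcases hχ with rfl | rfl <;> omega)
  constructor
  · rintro ⟨n, -, hmn, hd⟩
    obtain ⟨hde, hg⟩ := Nat.even_and_gcd_div_dvd_two_of_dvd_sq_sub_one hme hm0 hmn hd
    exact ⟨hde, padicValNat_two_eq_of_gcd_div_dvd_two hm0 hdm hde hg, hg⟩
  · rintro ⟨hde, -, hg⟩
    exact Nat.exists_dvd_sq_sub_one_gcd_sub_one_eq hm0 hdm hde hg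

/-- Proposition 3.1: characterization of (q, χ, 2)-admissible integers. -/
theorem stmt_7 (q : ℕ) (hq : ∃ p' k : ℕ, p'.Prime ∧ Odd p' ∧ 0 < k ∧ q = p' ^ k)
    (χ : ℤ) (hχ : χ = 1 ∨ χ = -1) (m : ℕ) (hm : (m : ℤ) = (q : ℤ) - χ)
    (d : ℕ) (hdm : d ∣ m) (hdne : d ≠ m) :
    (∃ n : ℕ, 0 < n ∧ m ∣ n ^ 2 - 1 ∧ Nat.gcd (n - 1) m = d) ↔
      (Even d ∧
        (padicValNat 2 d = 1 ∨ padicValNat 2 d = padicValNat 2 m - 1 ∨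
          padicValNat 2 d = padicValNat 2 m) ∧
        Nat.gcd d (m / d) ∣ 2) :=
  stmt_7_general q hq χ hχ m hm d hdm
end

section
/- Let d be a proper divisor of m with d even, ν₂(d) ∈ {1, ν₂(m) − 1, ν₂(m)}, and gcd(d, m/d) dividing 2. Then for every integer n with 1 ≤ n ≤ m, the following are equivalent: (1) m divides n² − 1 and gcd(n−1, m) = d; (2) n ≡ k·(m/d) − 1 (mod m), where the allowed values of k are: k ≡ 2·(m/d)^(φ(d)−1) (mod d) if ν₂(d) = ν₂(m); k ≡ (m/(2d))^(φ(d)−1) + d/2 (mod d) if ν₂(m) = ν₂(d) + 1 and ν₂(d) ≥ 1; and k ≡ (m/(2d))^(φ(d)−1) (mod d) or k ≡ (m/(2d))^(φ(d)−1) + d/2 (mod d) if ν₂(d) = 1 and ν₂(m) ≥ 3. -/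
/-!
Write `m = d e`. For `n ≥ 1`, `m ∣ n² - 1` and `gcd (n - 1, m) = d` hold exactly when
`n - 1 = d t` and `n + 1 = e k` with `t` coprime to `e`, i.e. `e k = d t + 2`. A common divisor
of `t` and `e` divides `e k - d t = 2`, so only the parity of `t` matters, and the condition on
`k` becomes a linear congruence modulo `d`: `e k ≡ 2` if `e` is odd, `(e/2) k ≡ d/2 + 1` if `e`
is even. Euler's theorem inverts `e`, resp. `e/2`, and gives the three formulas according as
`ν₂(e) = 0`, `1` or `≥ 2`; in the last case `gcd (d, e) ∣ 2` forces `d/2` to be odd, and the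
congruence only determines `k` modulo `d/2`.
-/

open scoped Nat

theorem Nat.coprime_of_gcd_dvd_two {a b : ℕ} (hab : a.gcd b ∣ 2) (ha : ¬ 2 ∣ a) :
    a.Coprime b := by
  rcases (Nat.dvd_prime Nat.prime_two).mp hab with h1 | h2
  · exact h1
  · exact absurd (h2 ▸ Nat.gcd_dvd_left a b) ha

theorem padicValNat_two_mul {n : ℕ} (hn : n ≠ 0) :
    padicValNat 2 (2 * n) = padicValNat 2 n + 1 := by
  rw [padicValNat.mul two_ne_zero hn, padicValNat_self, add_comm]

theorem Nat.dvd_mul_add_two_and_gcd_eq_iff {a d e : ℕ} (hd : d ≠ 0) :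
    (d * e ∣ a * (a + 2) ∧ a.gcd (d * e) = d) ↔
      ∃ t k, a = d * t ∧ a + 2 = e * k ∧ t.Coprime e := by
  constructor
  · rintro ⟨hdvd, hgcd⟩
    obtain ⟨t, rfl⟩ : d ∣ a := hgcd ▸ Nat.gcd_dvd_left a (d * e)
    have hte : t.Coprime e := by
      rwa [Nat.gcd_mul_left, Nat.mul_eq_left hd] at hgcd
    rw [mul_assoc] at hdvd
    obtain ⟨k, hk⟩ := hte.symm.dvd_of_dvd_mul_left
      (Nat.dvd_of_mul_dvd_mul_left (Nat.pos_of_ne_zero hd) hdvd)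
    exact ⟨t, k, rfl, hk, hte⟩
  · rintro ⟨t, k, rfl, hk, hte⟩
    refine ⟨?_, by rw [Nat.gcd_mul_left, hte.gcd_eq_one, mul_one]⟩
    rw [hk]
    exact ⟨t * k, by ring⟩

theorem Int.mul_modEq_iff_modEq_pow_totient_mul {a n : ℕ} (hn : n ≠ 0) (ha : a.Coprime n)
    {k b : ℤ} : a * k ≡ b [ZMOD n] ↔ k ≡ a ^ (φ n - 1) * b [ZMOD n] := by
  have hinv : (a : ℤ) ^ (φ n - 1) * a ≡ 1 [ZMOD n] := by
    rw [← pow_succ, Nat.sub_add_cancel (Nat.totient_pos.mpr (Nat.pos_of_ne_zero hn))]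
    exact_mod_cast Int.natCast_modEq_iff.mpr (Nat.ModEq.pow_totient ha)
  constructor
  · intro h
    calc k = 1 * k := (one_mul k).symm
      _ ≡ a ^ (φ n - 1) * a * k [ZMOD n] := hinv.symm.mul_right k
      _ = a ^ (φ n - 1) * (a * k) := mul_assoc ..
      _ ≡ a ^ (φ n - 1) * b [ZMOD n] := h.mul_left _
  · intro h
    calc (a : ℤ) * k ≡ a * (a ^ (φ n - 1) * b) [ZMOD n] := h.mul_left _
      _ = a ^ (φ n - 1) * a * b := by ring
      _ ≡ 1 * b [ZMOD n] := hinv.mul_right b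
      _ = b := one_mul b

theorem Int.modEq_iff_modEq_two_mul_or {n a b : ℤ} :
    a ≡ b [ZMOD n] ↔ a ≡ b [ZMOD 2 * n] ∨ a ≡ b + n [ZMOD 2 * n] := by
  simp only [Int.modEq_iff_dvd]
  constructor
  · rintro ⟨j, hj⟩
    obtain ⟨i, rfl | rfl⟩ := Int.even_or_odd' j
    · exact Or.inl ⟨i, by linear_combination hj⟩
    · exact Or.inr ⟨i + 1, by linear_combination hj⟩
  · rintro (⟨j, hj⟩ | ⟨j, hj⟩)
    · exact ⟨2 * j, by linear_combination hj⟩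
    · exact ⟨2 * j - 1, by linear_combination hj⟩

theorem Int.modEq_add_one_two_mul_iff {x h : ℤ} (hh : Odd h) (hx : Even x) :
    x ≡ h + 1 [ZMOD 2 * h] ↔ x ≡ 1 [ZMOD h] := by
  refine ⟨fun H => (H.of_mul_left 2).trans Int.add_modEq_left, fun H => ?_⟩
  have h2 : 2 ∣ h + 1 - x :=
    (Int.even_sub.mpr (iff_of_true (Int.even_add_one.mpr (Int.not_even_iff_odd.mpr hh)) hx)).two_dvd
  have hh' : h ∣ h + 1 - x := by
    rw [add_sub_assoc]
    exact dvd_add (dvd_refl h) (Int.modEq_iff_dvd.mp H)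
  obtain ⟨r, rfl⟩ := hh
  exact Int.modEq_iff_dvd.mpr
    ((show IsCoprime (2 : ℤ) (2 * r + 1) from ⟨-r, 1, by ring⟩).mul_dvd h2 hh')

/-- With `n + 1 = e k` and `n - 1 = d t`, this says `d e ∣ n² - 1` and `gcd (n - 1, d e) = d`. -/
def IsAdmissible (d e k : ℤ) : Prop :=
  ∃ t, e * k = d * t + 2 ∧ IsCoprime t e

theorem isAdmissible_add_mul_iff {d e k : ℤ} (j : ℤ) :
    IsAdmissible d e (k + d * j) ↔ IsAdmissible d e k := by
  constructor
  · rintro ⟨t, ht, hte⟩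
    exact ⟨t - e * j, by linear_combination ht, IsCoprime.sub_mul_left_left_iff.mpr hte⟩
  · rintro ⟨t, ht, hte⟩
    exact ⟨t + e * j, by linear_combination ht, IsCoprime.add_mul_left_left_iff.mpr hte⟩

theorem isCoprime_iff_not_two_dvd_and_two_dvd {d e k t : ℤ} (h : e * k = d * t + 2) :
    IsCoprime t e ↔ ¬ (2 ∣ t ∧ 2 ∣ e) := by
  have hg : t.gcd e ∣ 2 := by
    have := dvd_sub ((Int.gcd_dvd_right t e).mul_right k) ((Int.gcd_dvd_left t e).mul_left d)
    rw [h, add_sub_cancel_left] at this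
    exact_mod_cast this
  rw [Int.isCoprime_iff_gcd_eq_one]
  constructor
  · rintro hg1 ⟨ht, he⟩
    have := Int.dvd_gcd ht he
    rw [hg1] at this
    exact absurd this (by decide)
  · intro hnot
    rcases (Nat.dvd_prime Nat.prime_two).mp hg with hg1 | hg2
    · exact hg1
    · have h2t : ((2 : ℕ) : ℤ) ∣ t := hg2 ▸ Int.gcd_dvd_left t e
      have h2e : ((2 : ℕ) : ℤ) ∣ e := hg2 ▸ Int.gcd_dvd_right t e
      exact absurd ⟨h2t, h2e⟩ hnot

theorem isAdmissible_iff_of_not_two_dvd {d e k : ℤ} (he : ¬ 2 ∣ e) :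
    IsAdmissible d e k ↔ e * k ≡ 2 [ZMOD d] := by
  rw [Int.modEq_iff_dvd, dvd_sub_comm]
  constructor
  · rintro ⟨t, ht, -⟩
    exact ⟨t, by linarith⟩
  · rintro ⟨t, ht⟩
    have ht' : e * k = d * t + 2 := by linarith
    exact ⟨t, ht', (isCoprime_iff_not_two_dvd_and_two_dvd ht').mpr fun h2 => he h2.2⟩

theorem isAdmissible_two_mul_iff {h f k : ℤ} :
    IsAdmissible (2 * h) (2 * f) k ↔ f * k ≡ h + 1 [ZMOD 2 * h] := by
  rw [Int.modEq_iff_dvd, dvd_sub_comm]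
  constructor
  · rintro ⟨t, ht, hte⟩
    have hodd : ¬ 2 ∣ t := fun h2 =>
      (isCoprime_iff_not_two_dvd_and_two_dvd ht).mp hte ⟨h2, dvd_mul_right 2 f⟩
    obtain ⟨s, rfl⟩ : Odd t := Int.not_even_iff_odd.mp (by rwa [even_iff_two_dvd])
    exact ⟨s, by linarith⟩
  · rintro ⟨s, hs⟩
    have ht : 2 * f * k = 2 * h * (2 * s + 1) + 2 := by linarith
    exact ⟨2 * s + 1, ht, (isCoprime_iff_not_two_dvd_and_two_dvd ht).mpr fun h2 => by omega⟩

theorem isAdmissible_iff_of_coprime {d e : ℕ} (hd : d ≠ 0) (he : ¬ 2 ∣ e) (hde : e.Coprime d)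
    (k : ℕ) : IsAdmissible d e k ↔ k ≡ 2 * e ^ (φ d - 1) [MOD d] := by
  rw [isAdmissible_iff_of_not_two_dvd (by exact_mod_cast he),
    Int.mul_modEq_iff_modEq_pow_totient_mul hd hde, ← Int.natCast_modEq_iff]
  push_cast
  rw [mul_comm]

theorem isAdmissible_two_mul_iff_of_not_two_dvd {h f : ℕ} (hh : h ≠ 0) (hf : ¬ 2 ∣ f)
    (hfh : f.Coprime (2 * h)) (k : ℕ) :
    IsAdmissible (2 * h : ℕ) (2 * f : ℕ) k ↔ k ≡ f ^ (φ (2 * h) - 1) + h [MOD 2 * h] := by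
  have hsolve := Int.mul_modEq_iff_modEq_pow_totient_mul (by omega) hfh (k := k) (b := h + 1)
  push_cast at hsolve ⊢
  rw [isAdmissible_two_mul_iff, hsolve, ← Int.natCast_modEq_iff]
  push_cast
  obtain ⟨u, hu⟩ : Odd ((f : ℤ) ^ (φ (2 * h) - 1)) :=
    (Int.not_even_iff_odd.mp (by exact_mod_cast (even_iff_two_dvd.not.mpr hf))).pow
  -- an odd multiple of `h` is `h` modulo `2 h`
  have hc : (f : ℤ) ^ (φ (2 * h) - 1) * (h + 1) ≡ f ^ (φ (2 * h) - 1) + h [ZMOD 2 * h] :=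
    Int.modEq_iff_dvd.mpr ⟨-u, by rw [hu]; ring⟩
  exact ⟨fun hk => hk.trans hc, fun hk => hk.trans hc.symm⟩

theorem isAdmissible_two_mul_iff_of_two_dvd {h f : ℕ} (hh : ¬ 2 ∣ h) (hf : 2 ∣ f)
    (hfh : f.Coprime h) (k : ℕ) :
    IsAdmissible (2 * h : ℕ) (2 * f : ℕ) k ↔
      k ≡ f ^ (φ (2 * h) - 1) [MOD 2 * h] ∨ k ≡ f ^ (φ (2 * h) - 1) + h [MOD 2 * h] := by
  have hodd : Odd h := Nat.odd_iff.mpr (by omega)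
  have hsolve := Int.mul_modEq_iff_modEq_pow_totient_mul (by omega) hfh (k := k) (b := 1)
  rw [Nat.totient_two_mul_of_odd hodd, ← Int.natCast_modEq_iff, ← Int.natCast_modEq_iff]
  push_cast
  rw [← Int.modEq_iff_modEq_two_mul_or, ← mul_one ((f : ℤ) ^ _), ← hsolve,
    isAdmissible_two_mul_iff, Int.modEq_add_one_two_mul_iff (by exact_mod_cast hodd)]
  exact (even_iff_two_dvd.mpr (by exact_mod_cast hf)).mul_right _

theorem dvd_sq_sub_one_and_gcd_eq_iff {n d e : ℕ} (hn : 1 ≤ n) (hd : d ≠ 0) :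
    (d * e ∣ n ^ 2 - 1 ∧ (n - 1).gcd (d * e) = d) ↔
      ∃ k : ℕ, n + 1 = e * k ∧ IsAdmissible d e k := by
  obtain ⟨a, rfl⟩ : ∃ a, n = a + 1 := ⟨n - 1, by omega⟩
  rw [show (a + 1) ^ 2 - 1 = a * (a + 2) by rw [Nat.sub_eq_of_eq_add]; ring, Nat.add_sub_cancel,
    Nat.dvd_mul_add_two_and_gcd_eq_iff hd]
  constructor
  · rintro ⟨t, k, rfl, hk, hte⟩
    refine ⟨k, hk, t, ?_, Nat.isCoprime_iff_coprime.mpr hte⟩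
    rw [← Nat.cast_mul, ← hk]
    push_cast
    ring
  · rintro ⟨k, hk, t, hkt, hte⟩
    have hdt : (d : ℤ) * t = a := by
      have := congrArg (Nat.cast : ℕ → ℤ) hk
      push_cast at this
      linarith
    lift t to ℕ using nonneg_of_mul_nonneg_right (hdt ▸ Int.natCast_nonneg a) (by positivity)
    exact ⟨t, k, by exact_mod_cast hdt.symm, by omega, Nat.isCoprime_iff_coprime.mp hte⟩

theorem exists_eq_mul_isAdmissible_iff {n d e : ℕ} (he : e ≠ 0) :
    (∃ k : ℕ, n + 1 = e * k ∧ IsAdmissible d e k) ↔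
      ∃ k : ℕ, IsAdmissible d e k ∧ (n : ℤ) ≡ k * e - 1 [ZMOD (d * e : ℕ)] := by
  constructor
  · rintro ⟨k, hk, hadm⟩
    refine ⟨k, hadm, ?_⟩
    rw [show (n : ℤ) = k * e - 1 by push_cast [← Nat.cast_inj (R := ℤ)] at hk; linarith]
  · rintro ⟨k, hadm, hmod⟩
    obtain ⟨j, hj⟩ := Int.modEq_iff_dvd.mp hmod
    push_cast at hj
    have hn : (n : ℤ) + 1 = e * (k + d * -j) := by linear_combination -hj
    have hpos : 0 ≤ (k : ℤ) + d * -j :=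
      nonneg_of_mul_nonneg_right (hn ▸ by positivity) (by positivity : (0 : ℤ) < e)
    lift (k : ℤ) + d * -j to ℕ using hpos with k' hk'
    exact ⟨k', by exact_mod_cast hn, hk' ▸ (isAdmissible_add_mul_iff _).mpr hadm⟩

def RedeiCongruence (m d k : ℕ) : Prop :=
  (padicValNat 2 d = padicValNat 2 m ∧ k ≡ 2 * (m / d) ^ (φ d - 1) [MOD d]) ∨
    (padicValNat 2 m = padicValNat 2 d + 1 ∧ 1 ≤ padicValNat 2 d ∧
      k ≡ (m / (2 * d)) ^ (φ d - 1) + d / 2 [MOD d]) ∨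
    (padicValNat 2 d = 1 ∧ 3 ≤ padicValNat 2 m ∧
      (k ≡ (m / (2 * d)) ^ (φ d - 1) [MOD d] ∨
        k ≡ (m / (2 * d)) ^ (φ d - 1) + d / 2 [MOD d]))

theorem redeiCongruence_iff_isAdmissible {d e : ℕ} (hd : Even d) (hd0 : d ≠ 0) (he0 : e ≠ 0)
    (hgcd : d.gcd e ∣ 2) (k : ℕ) : RedeiCongruence (d * e) d k ↔ IsAdmissible d e k := by
  obtain ⟨h, rfl⟩ := hd.two_dvd
  have hh0 : h ≠ 0 := right_ne_zero_of_mul hd0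
  unfold RedeiCongruence
  rw [Nat.mul_div_cancel_left e (Nat.pos_of_ne_zero hd0), padicValNat.mul hd0 he0,
    padicValNat_two_mul hh0, Nat.mul_div_cancel_left h two_pos]
  by_cases he : 2 ∣ e
  · obtain ⟨f, rfl⟩ := he
    have hf0 : f ≠ 0 := right_ne_zero_of_mul he0
    rw [show 2 * h * (2 * f) / (2 * (2 * h)) = f by
      rw [show 2 * h * (2 * f) = 2 * (2 * h) * f by ring, Nat.mul_div_cancel_left f (by omega)],
      padicValNat_two_mul hf0]
    by_cases hf : 2 ∣ f
    · have hh : ¬ 2 ∣ h := fun h2 =>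
        absurd ((Nat.dvd_gcd (mul_dvd_mul_left 2 h2) (mul_dvd_mul_left 2 hf)).trans hgcd)
          (by decide)
      have hfh : f.Coprime h := (Nat.coprime_of_gcd_dvd_two
        ((by rw [Nat.gcd_mul_left]; exact dvd_mul_left _ _ : h.gcd f ∣ _).trans hgcd) hh).symm
      have hvf : 1 ≤ padicValNat 2 f := one_le_padicValNat_of_dvd hf0 hf
      rw [isAdmissible_two_mul_iff_of_two_dvd hh hf hfh, padicValNat.eq_zero_of_not_dvd hh]
      constructor
      · rintro (⟨hv, -⟩ | ⟨hv, -⟩ | ⟨-, -, hk⟩)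
        · omega
        · omega
        · exact hk
      · exact fun hk => Or.inr (Or.inr ⟨rfl, by omega, hk⟩)
    · have hfd : f.gcd (2 * h) ∣ (2 * h).gcd (2 * f) := by
        rw [Nat.gcd_comm (2 * h)]
        exact Nat.gcd_dvd_gcd_of_dvd_left _ (dvd_mul_left f 2)
      have hfh : f.Coprime (2 * h) := Nat.coprime_of_gcd_dvd_two (hfd.trans hgcd) hf
      rw [isAdmissible_two_mul_iff_of_not_two_dvd hh0 hf hfh, padicValNat.eq_zero_of_not_dvd hf]
      constructor
      · rintro (⟨hv, -⟩ | ⟨-, -, hk⟩ | ⟨hv, hv', -⟩)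
        · omega
        · exact hk
        · omega
      · exact fun hk => Or.inr (Or.inl ⟨rfl, by omega, hk⟩)
  · have hde : e.Coprime (2 * h) := Nat.coprime_of_gcd_dvd_two (by rwa [Nat.gcd_comm]) he
    rw [isAdmissible_iff_of_coprime hd0 he hde, padicValNat.eq_zero_of_not_dvd he]
    constructor
    · rintro (⟨-, hk⟩ | ⟨hv, -⟩ | ⟨hv, hv', -⟩)
      · exact hk
      · omega
      · omega
    · exact fun hk => Or.inl ⟨rfl, hk⟩

theorem stmt_8_general (m : ℕ) (d : ℕ) (hdm : d ∣ m) (hdeven : Even d)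
    (hgcd : Nat.gcd d (m / d) ∣ 2) :
    ∀ n : ℕ, 1 ≤ n → n ≤ m →
      ((m ∣ n ^ 2 - 1 ∧ Nat.gcd (n - 1) m = d) ↔
        ∃ k : ℕ,
          ((padicValNat 2 d = padicValNat 2 m ∧
              k ≡ 2 * (m / d) ^ (Nat.totient d - 1) [MOD d]) ∨
            (padicValNat 2 m = padicValNat 2 d + 1 ∧ 1 ≤ padicValNat 2 d ∧
              k ≡ (m / (2 * d)) ^ (Nat.totient d - 1) + d / 2 [MOD d]) ∨
            (padicValNat 2 d = 1 ∧ 3 ≤ padicValNat 2 m ∧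
              (k ≡ (m / (2 * d)) ^ (Nat.totient d - 1) [MOD d] ∨
                k ≡ (m / (2 * d)) ^ (Nat.totient d - 1) + d / 2 [MOD d]))) ∧
          (n : ℤ) ≡ (k : ℤ) * ((m / d : ℕ) : ℤ) - 1 [ZMOD (m : ℤ)]) := by
  intro n hn hnm
  obtain ⟨e, rfl⟩ := hdm
  obtain ⟨hd, he⟩ : d ≠ 0 ∧ e ≠ 0 := mul_ne_zero_iff.mp (by omega)
  have hmd : d * e / d = e := Nat.mul_div_cancel_left e (Nat.pos_of_ne_zero hd)
  rw [hmd] at hgcd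
  rw [dvd_sq_sub_one_and_gcd_eq_iff hn hd, exists_eq_mul_isAdmissible_iff he]
  exact exists_congr fun k =>
    and_congr (redeiCongruence_iff_isAdmissible hdeven hd he hgcd k).symm (by rw [hmd])

/-- Proposition 3.2: explicit formulas for the Rédei involutions with
d + χ + 1 fixed points. -/
theorem stmt_8 (q : ℕ) (hq : ∃ p' j : ℕ, p'.Prime ∧ Odd p' ∧ 0 < j ∧ q = p' ^ j)
    (χ : ℤ) (hχ : χ = 1 ∨ χ = -1) (m : ℕ) (hm : (m : ℤ) = (q : ℤ) - χ)
    (d : ℕ) (hdm : d ∣ m) (hdne : d ≠ m) (hdeven : Even d)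
    (hval : padicValNat 2 d = 1 ∨ padicValNat 2 d = padicValNat 2 m - 1 ∨
      padicValNat 2 d = padicValNat 2 m)
    (hgcd : Nat.gcd d (m / d) ∣ 2) :
    ∀ n : ℕ, 1 ≤ n → n ≤ m →
      ((m ∣ n ^ 2 - 1 ∧ Nat.gcd (n - 1) m = d) ↔
        ∃ k : ℕ,
          ((padicValNat 2 d = padicValNat 2 m ∧
              k ≡ 2 * (m / d) ^ (Nat.totient d - 1) [MOD d]) ∨
            (padicValNat 2 m = padicValNat 2 d + 1 ∧ 1 ≤ padicValNat 2 d ∧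
              k ≡ (m / (2 * d)) ^ (Nat.totient d - 1) + d / 2 [MOD d]) ∨
            (padicValNat 2 d = 1 ∧ 3 ≤ padicValNat 2 m ∧
              (k ≡ (m / (2 * d)) ^ (Nat.totient d - 1) [MOD d] ∨
                k ≡ (m / (2 * d)) ^ (Nat.totient d - 1) + d / 2 [MOD d]))) ∧
          (n : ℤ) ≡ (k : ℤ) * ((m / d : ℕ) : ℤ) - 1 [ZMOD (m : ℤ)]) :=
  stmt_8_general m d hdm hdeven hgcd
end

section
/- Let q be a power of an odd prime, let χ, χ' ∈ {−1, 1} with χ ≠ χ', and set m = q − χ and m' = q − χ' (as natural numbers). Assume ν₂(m) ≥ 3. Let n, n' be positive integers such that m divides n² − 1, ν₂(gcd(n − 1, m)) = 1, and m' divides n'² − 1. Then, as integers, gcd(n − 1, m) + χ ≠ gcd(n' − 1, m') + χ'. -/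
/-! Since `4 ∣ q - χ`, the other modulus `q - χ' = q - χ ± 2` is `≡ 2 [MOD 4]`, so none of its
divisors is a multiple of `4`. But `gcd(n - 1, q - χ) ≡ 2 [MOD 4]`, and equality of the two sides
would make `gcd(n' - 1, q - χ')` equal to `gcd(n - 1, q - χ) ± 2 ≡ 0 [MOD 4]`. -/

lemma Nat.mod_four_eq_two_of_padicValNat_two_eq_one {g : ℕ} (h : padicValNat 2 g = 1) :
    g % 4 = 2 := by
  have hg : g ≠ 0 := by rintro rfl; simp at h
  have h2 : 2 ∣ g := dvd_of_one_le_padicValNat h.ge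
  have h4 : ¬ 2 ^ 2 ∣ g := by rw [padicValNat_dvd_iff_le hg]; omega
  omega

lemma Nat.four_dvd_of_two_le_padicValNat_two {m : ℕ} (h : 2 ≤ padicValNat 2 m) : 4 ∣ m :=
  (pow_dvd_pow 2 h).trans pow_padicValNat_dvd

lemma Int.add_ne_add_of_emod_four_eq_two {χ χ' m m' g g' : ℤ} (hχ : χ = 1 ∨ χ = -1)
    (hχ' : χ' = 1 ∨ χ' = -1) (hne : χ ≠ χ') (hmm' : m + χ = m' + χ') (hm : 4 ∣ m)
    (hg : g % 4 = 2) (hg' : g' ∣ m') : g + χ ≠ g' + χ' := by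
  intro heq
  have h4g' : 4 ∣ g' := by omega
  have h4m' : ¬ 4 ∣ m' := by omega
  exact h4m' (h4g'.trans hg')

theorem stmt_13_general (q : ℕ)
    (χ χ' : ℤ) (hχ : χ = 1 ∨ χ = -1) (hχ' : χ' = 1 ∨ χ' = -1) (hne : χ ≠ χ')
    (m m' : ℕ) (hm : (m : ℤ) = (q : ℤ) - χ) (hm' : (m' : ℤ) = (q : ℤ) - χ')
    (hν : 3 ≤ padicValNat 2 m)
    (n n' : ℕ)
    (hd : padicValNat 2 (Nat.gcd (n - 1) m) = 1) :
    ((Nat.gcd (n - 1) m : ℤ) + χ ≠ (Nat.gcd (n' - 1) m' : ℤ) + χ') := by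
  have h4m : (4 : ℤ) ∣ m := mod_cast Nat.four_dvd_of_two_le_padicValNat_two (by omega)
  have hg : (n - 1).gcd m % 4 = 2 := Nat.mod_four_eq_two_of_padicValNat_two_eq_one hd
  have hg' : ((n' - 1).gcd m' : ℤ) ∣ m' := Int.natCast_dvd_natCast.mpr (Nat.gcd_dvd_right _ _)
  exact Int.add_ne_add_of_emod_four_eq_two hχ hχ' hne (by omega) h4m
    (by exact_mod_cast hg) hg'

/-- Corollary 3.8: involutions associated with parameters of distinct
quadratic characters have distinct cycle structures when ν₂(q-χ) ≥ 3 and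
ν₂(gcd(n-1, q-χ)) = 1. -/
theorem stmt_13 (q : ℕ) (hq : ∃ p' j : ℕ, p'.Prime ∧ Odd p' ∧ 0 < j ∧ q = p' ^ j)
    (χ χ' : ℤ) (hχ : χ = 1 ∨ χ = -1) (hχ' : χ' = 1 ∨ χ' = -1) (hne : χ ≠ χ')
    (m m' : ℕ) (hm : (m : ℤ) = (q : ℤ) - χ) (hm' : (m' : ℤ) = (q : ℤ) - χ')
    (hν : 3 ≤ padicValNat 2 m)
    (n n' : ℕ) (hn : 0 < n) (hn' : 0 < n')
    (hinv : m ∣ n ^ 2 - 1)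
    (hd : padicValNat 2 (Nat.gcd (n - 1) m) = 1)
    (hinv' : m' ∣ n' ^ 2 - 1) :
    ((Nat.gcd (n - 1) m : ℤ) + χ ≠ (Nat.gcd (n' - 1) m' : ℤ) + χ') :=
  stmt_13_general q χ χ' hχ hχ' hne m m' hm hm' hν n n' hd
end

section
/- Let d be a proper divisor of m. Then there exists a positive integer n such that m divides n⁴ − 1, gcd(n² − 1, m) = d, and gcd(n − 1, m) = d, if and only if ν₂(d) = ν₂(m), ν_ℓ(d) = ν_ℓ(m) for every prime ℓ with ℓ ≡ 3 (mod 4), and gcd(d, m/d) = 1. -/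
/-!
Write `m = d * e`. Since `n ^ 4 - 1 = (n ^ 2 - 1) * (n ^ 2 + 1)` and the two factors have greatest
common divisor dividing `2`, the conditions on `n` amount to `d ∣ n - 1` and `e ∣ n ^ 2 + 1` with `e`
odd and coprime to `d`; doubling `d` inside `gcd (n ^ 2 - 1) m` rules out an even `e`. The valuation
conditions say exactly that every prime factor of `e` is `1 mod 4`, which is also what is needed
for `-1` to be a square modulo `e`: modulo each prime power factor by Hensel's lemma, and then
modulo `e` by the Chinese remainder theorem.
-/

open Polynomial

lemma PadicInt.norm_lt_one_iff_toZMod_eq_zero {p : ℕ} [Fact p.Prime] (x : ℤ_[p]) :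
    ‖x‖ < 1 ↔ PadicInt.toZMod x = 0 := by
  rw [← PadicInt.mem_nonunits, ← IsLocalRing.mem_maximalIdeal, ← PadicInt.ker_toZMod,
    RingHom.mem_ker]

lemma ZMod.isSquare_neg_one_prime_pow {p : ℕ} [Fact p.Prime] (hp : p % 4 = 1) (k : ℕ) :
    IsSquare (-1 : ZMod (p ^ k)) := by
  obtain ⟨b, hb⟩ := ZMod.exists_sq_eq_neg_one_iff.mpr (by omega : p % 4 ≠ 3)
  obtain ⟨a, rfl⟩ := ZMod.ringHom_surjective PadicInt.toZMod b
  have h2a : ‖2 * a‖ = 1 := by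
    refine le_antisymm (PadicInt.norm_le_one _) (not_lt.mp ?_)
    rw [PadicInt.norm_lt_one_iff_toZMod_eq_zero, map_mul, map_ofNat]
    refine mul_ne_zero (Ring.two_ne_zero ?_) fun h => by simp [h] at hb
    rw [ZMod.ringChar_zmod_n]
    omega
  have ha : ‖a ^ 2 + 1‖ < 1 := by
    rw [PadicInt.norm_lt_one_iff_toZMod_eq_zero, map_add, map_pow, map_one, sq, ← hb,
      neg_add_cancel]
  have hderiv : aeval a (derivative (X ^ 2 + 1 : ℤ[X])) = 2 * a := by
    rw [derivative_add, derivative_X_pow, derivative_one, add_zero, map_mul, map_pow, aeval_X,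
      aeval_C]
    simp
  obtain ⟨z, hz, -⟩ := hensels_lemma (F := (X ^ 2 + 1 : ℤ[X])) (a := a) (by
    rw [hderiv, h2a]
    simpa using ha)
  have hzk := congrArg (PadicInt.toZModPow k) hz
  simp only [map_add, map_pow, aeval_X, map_one, map_zero] at hzk
  exact ⟨PadicInt.toZModPow k z, by linear_combination -hzk⟩

lemma ZMod.isSquare_neg_one_of_forall_prime_dvd_mod_four_eq_one {e : ℕ}
    (he : ∀ p, p.Prime → p ∣ e → p % 4 = 1) : IsSquare (-1 : ZMod e) := by
  induction e using Nat.recOnPosPrimePosCoprime with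
  | prime_pow p k hp hk =>
    have : Fact p.Prime := ⟨hp⟩
    exact ZMod.isSquare_neg_one_prime_pow (he p hp (dvd_pow_self p hk.ne')) k
  | zero => exact absurd (he 2 Nat.prime_two (dvd_zero 2)) (by norm_num)
  | one => exact ⟨0, Subsingleton.elim _ _⟩
  | coprime a b _ _ hab iha ihb =>
    exact ZMod.isSquare_neg_one_mul hab (iha fun p hp hpa => he p hp (hpa.mul_right b))
      (ihb fun p hp hpb => he p hp (hpb.mul_left a))

lemma ZMod.isSquare_neg_one_of_dvd_sq_add_one {e x : ℕ} (h : e ∣ x ^ 2 + 1) :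
    IsSquare (-1 : ZMod e) := by
  have hx := (ZMod.natCast_eq_zero_iff _ _).mpr h
  push_cast at hx
  exact ⟨x, by linear_combination -hx⟩

lemma Nat.exists_dvd_sq_add_one {e : ℕ} (he : ∀ p, p.Prime → p ∣ e → p % 4 = 1) :
    ∃ x : ℕ, e ∣ x ^ 2 + 1 := by
  have : NeZero e :=
    ⟨by rintro rfl; exact absurd (he 2 Nat.prime_two (dvd_zero 2)) (by norm_num)⟩
  obtain ⟨y, hy⟩ := ZMod.isSquare_neg_one_of_forall_prime_dvd_mod_four_eq_one he
  refine ⟨y.val, (ZMod.natCast_eq_zero_iff _ _).mp ?_⟩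
  push_cast
  rw [ZMod.natCast_zmod_val, sq, ← hy, neg_add_cancel]

lemma Nat.forall_prime_dvd_mod_four_eq_one_iff {e : ℕ} :
    (∀ p, p.Prime → p ∣ e → p % 4 = 1) ↔ ¬ 2 ∣ e ∧ ∀ ℓ, ℓ.Prime → ℓ % 4 = 3 → ¬ ℓ ∣ e := by
  refine ⟨fun h => ⟨fun h2 => by simpa using h 2 Nat.prime_two h2,
    fun ℓ hℓ hℓ3 hℓe => by simpa [hℓ3] using h ℓ hℓ hℓe⟩, fun ⟨h2, h3⟩ p hp hpe => ?_⟩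
  rcases hp.eq_two_or_odd with rfl | hodd
  · exact absurd hpe h2
  · by_contra hp1
    exact h3 p hp (by omega) hpe

lemma padicValNat_eq_padicValNat_mul_iff {ℓ d e : ℕ} (hℓ : ℓ.Prime) (hde : d * e ≠ 0) :
    padicValNat ℓ d = padicValNat ℓ (d * e) ↔ ¬ ℓ ∣ e := by
  have : Fact ℓ.Prime := ⟨hℓ⟩
  have he : e ≠ 0 := right_ne_zero_of_mul hde
  rw [padicValNat.mul (left_ne_zero_of_mul hde) he, dvd_iff_padicValNat_ne_zero he]
  omega

lemma padicValNat_eq_at_two_and_mod_four_three_iff {d e : ℕ} (hde : d * e ≠ 0) :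
    (padicValNat 2 d = padicValNat 2 (d * e) ∧
        ∀ ℓ : ℕ, ℓ.Prime → ℓ % 4 = 3 → padicValNat ℓ d = padicValNat ℓ (d * e)) ↔
      ∀ p, p.Prime → p ∣ e → p % 4 = 1 := by
  rw [Nat.forall_prime_dvd_mod_four_eq_one_iff,
    padicValNat_eq_padicValNat_mul_iff Nat.prime_two hde]
  refine and_congr_right' (forall₂_congr fun ℓ hℓ => ?_)
  rw [padicValNat_eq_padicValNat_mul_iff hℓ hde]

lemma Nat.coprime_of_dvd_add_two {a e : ℕ} (he : Odd e) (h : e ∣ a + 2) : Nat.Coprime a e := by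
  have hg2 : Nat.gcd a e ∣ 2 :=
    (Nat.dvd_add_right (Nat.gcd_dvd_left a e)).mp ((Nat.gcd_dvd_right a e).trans h)
  rcases (Nat.dvd_prime Nat.prime_two).mp hg2 with hg | hg
  · exact hg
  · exact absurd (hg ▸ Nat.gcd_dvd_right a e) he.not_two_dvd_nat

lemma Nat.dvd_of_mul_dvd_mul_of_gcd_eq {a b d e : ℕ} (hd : d ≠ 0) (hg : Nat.gcd a (d * e) = d)
    (h : d * e ∣ a * b) : e ∣ b := by
  obtain ⟨a', rfl⟩ : d ∣ a := hg ▸ Nat.gcd_dvd_left a (d * e)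
  rw [Nat.gcd_mul_left, mul_eq_left₀ hd] at hg
  rw [mul_assoc] at h
  exact (Nat.coprime_comm.mp hg).dvd_of_dvd_mul_left
    (Nat.dvd_of_mul_dvd_mul_left (Nat.pos_of_ne_zero hd) h)

lemma Nat.pow_four_sub_one (n : ℕ) : n ^ 4 - 1 = (n ^ 2 - 1) * (n ^ 2 + 1) := by
  rw [mul_comm, ← Nat.sq_sub_sq, ← pow_mul, one_pow]

lemma Nat.sq_sub_one (n : ℕ) : n ^ 2 - 1 = (n - 1) * (n + 1) := by
  rw [mul_comm, ← Nat.sq_sub_sq, one_pow]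

lemma Nat.coprime_sq_sub_one {n e : ℕ} (hn : 0 < n) (he : ¬ 2 ∣ e) (h : e ∣ n ^ 2 + 1) :
    Nat.Coprime (n ^ 2 - 1) e := by
  refine Nat.coprime_of_dvd_add_two (Nat.odd_iff.mpr (by omega)) ?_
  rwa [show n ^ 2 - 1 + 2 = n ^ 2 + 1 by have := Nat.one_le_pow 2 n hn; omega]

theorem forall_prime_dvd_mod_four_eq_one_and_coprime_of_gcd_eq {n d e : ℕ} (hde : d * e ≠ 0)
    (hn : 0 < n) (h4 : d * e ∣ n ^ 4 - 1) (h2 : Nat.gcd (n ^ 2 - 1) (d * e) = d)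
    (h1 : Nat.gcd (n - 1) (d * e) = d) :
    (∀ p, p.Prime → p ∣ e → p % 4 = 1) ∧ Nat.Coprime d e := by
  have hd : d ≠ 0 := left_ne_zero_of_mul hde
  have he : e ∣ n ^ 2 + 1 :=
    Nat.dvd_of_mul_dvd_mul_of_gcd_eq hd h2 (Nat.pow_four_sub_one n ▸ h4)
  have he2 : ¬ 2 ∣ e := by
    intro h2e
    have hn1 : 2 ∣ n + 1 := by simpa [← even_iff_two_dvd, parity_simps] using h2e.trans he
    have hd1 : d ∣ n - 1 := h1 ▸ Nat.gcd_dvd_left _ _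
    have h2d : d * 2 ∣ d := by
      have := Nat.dvd_gcd (Nat.sq_sub_one n ▸ mul_dvd_mul hd1 hn1) (mul_dvd_mul_left d h2e)
      rwa [h2] at this
    have := Nat.le_of_dvd (Nat.pos_of_ne_zero hd) h2d
    omega
  refine ⟨Nat.forall_prime_dvd_mod_four_eq_one_iff.mpr ⟨he2, fun ℓ hℓ hℓ3 hℓe => ?_⟩,
    (Nat.coprime_sq_sub_one hn he2 he).coprime_dvd_left (h2 ▸ Nat.gcd_dvd_left _ _)⟩
  have : Fact ℓ.Prime := ⟨hℓ⟩
  exact ZMod.exists_sq_eq_neg_one_iff.mp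
    (ZMod.isSquare_neg_one_of_dvd_sq_add_one (hℓe.trans he)) hℓ3

theorem exists_gcd_eq_of_forall_prime_dvd_mod_four_eq_one {d e : ℕ} (hde : d * e ≠ 0)
    (he : ∀ p, p.Prime → p ∣ e → p % 4 = 1) (hcop : Nat.Coprime d e) :
    ∃ n : ℕ, 0 < n ∧ d * e ∣ n ^ 4 - 1 ∧ Nat.gcd (n ^ 2 - 1) (d * e) = d ∧
      Nat.gcd (n - 1) (d * e) = d := by
  obtain ⟨x, hx⟩ := Nat.exists_dvd_sq_add_one he
  obtain ⟨k, hk1, hkx⟩ := Nat.chineseRemainder hcop 1 x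
  set n := k + d * e
  have hn : 0 < n := by omega
  have hd1 : d ∣ n - 1 :=
    (Nat.modEq_iff_dvd' hn).mp ((Nat.add_mul_mod_self_left k d e).trans hk1).symm
  have hnx : n ≡ x [MOD e] := (Nat.add_mul_mod_self_right k d e).trans hkx
  have he1 : e ∣ n ^ 2 + 1 :=
    Nat.modEq_zero_iff_dvd.mp (((hnx.pow 2).add_right 1).trans (Nat.modEq_zero_iff_dvd.mpr hx))
  have hcop2 : Nat.Coprime (n ^ 2 - 1) e :=
    Nat.coprime_sq_sub_one hn (fun h2 => by simpa using he 2 Nat.prime_two h2) he1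
  have hsq : n - 1 ∣ n ^ 2 - 1 := Nat.sq_sub_one n ▸ dvd_mul_right _ _
  refine ⟨n, hn, ?_, ?_, ?_⟩
  · rw [Nat.pow_four_sub_one]
    exact mul_dvd_mul (hd1.trans hsq) he1
  · rw [Nat.Coprime.gcd_mul_right_cancel_right d hcop2.symm, Nat.gcd_eq_right (hd1.trans hsq)]
  · rw [Nat.Coprime.gcd_mul_right_cancel_right d (hcop2.coprime_dvd_left hsq).symm,
      Nat.gcd_eq_right hd1]

theorem stmt_14_general (q : ℕ) (hq : ∃ p' j : ℕ, p'.Prime ∧ Odd p' ∧ 0 < j ∧ q = p' ^ j)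
    (χ : ℤ) (hχ : χ = 1 ∨ χ = -1) (m : ℕ) (hm : (m : ℤ) = (q : ℤ) - χ)
    (d : ℕ) (hdm : d ∣ m) :
    (∃ n : ℕ, 0 < n ∧ m ∣ n ^ 4 - 1 ∧ Nat.gcd (n ^ 2 - 1) m = d ∧
        Nat.gcd (n - 1) m = d) ↔
      (padicValNat 2 d = padicValNat 2 m ∧
        (∀ ℓ : ℕ, ℓ.Prime → ℓ % 4 = 3 → padicValNat ℓ d = padicValNat ℓ m) ∧
        Nat.gcd d (m / d) = 1) := by
  obtain ⟨p', j, hp', -, hj, rfl⟩ := hq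
  have hm0 : m ≠ 0 := by
    have := Nat.le_self_pow hj.ne' p'
    have := hp'.two_le
    rcases hχ with rfl | rfl <;> omega
  obtain ⟨e, rfl⟩ := hdm
  rw [Nat.mul_div_cancel_left e (Nat.pos_of_ne_zero (left_ne_zero_of_mul hm0)), ← and_assoc,
    padicValNat_eq_at_two_and_mod_four_three_iff hm0]
  exact ⟨fun ⟨_, hn, h4, h2, h1⟩ =>
      forall_prime_dvd_mod_four_eq_one_and_coprime_of_gcd_eq hm0 hn h4 h2 h1,
    fun ⟨he, hcop⟩ => exists_gcd_eq_of_forall_prime_dvd_mod_four_eq_one hm0 he hcop⟩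

/-- Proposition 3.12: characterization of (q, χ, 4)-admissible integers. -/
theorem stmt_14 (q : ℕ) (hq : ∃ p' j : ℕ, p'.Prime ∧ Odd p' ∧ 0 < j ∧ q = p' ^ j)
    (χ : ℤ) (hχ : χ = 1 ∨ χ = -1) (m : ℕ) (hm : (m : ℤ) = (q : ℤ) - χ)
    (d : ℕ) (hdm : d ∣ m) (hdne : d ≠ m) :
    (∃ n : ℕ, 0 < n ∧ m ∣ n ^ 4 - 1 ∧ Nat.gcd (n ^ 2 - 1) m = d ∧
        Nat.gcd (n - 1) m = d) ↔
      (padicValNat 2 d = padicValNat 2 m ∧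
        (∀ ℓ : ℕ, ℓ.Prime → ℓ % 4 = 3 → padicValNat ℓ d = padicValNat ℓ m) ∧
        Nat.gcd d (m / d) = 1) :=
  stmt_14_general q hq χ hχ m hm d hdm
end

section
/- Let q be a power of an odd prime. There exist χ ∈ {−1, 1} and a positive integer n such that (q − χ) divides n⁴ − 1, gcd(n² − 1, q − χ) = gcd(n − 1, q − χ), and (q − χ) does not divide n − 1, if and only if some prime ℓ with ℓ ≡ 1 (mod 4) divides q − 1 or q + 1. -/
/-!
If `m ∣ n⁴ - 1` but `m ∤ n - 1`, some prime `p` has `p ^ (v + 1) ∣ m` where `p ^ v ∥ n - 1`.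
The gcd condition forbids `p ^ (v + 1) ∣ n² - 1`, so `p ∣ n² + 1`; this rules out `p = 2` and
makes `-1` a square modulo `p`, i.e. `p ≡ 1 (mod 4)`. Conversely, if `ℓ ≡ 1 (mod 4)` and
`m = ℓ ^ e * M` with `ℓ ∤ M`, choose `n` to be a square root of `-1` modulo `ℓ ^ e` and
`n ≡ 1 (mod M)`: then `n² - 1` is prime to `ℓ`, so both gcds equal `M`, while `ℓ ∤ n - 1`.
-/

/-- With `m = q - χ(a)`, this says that the Rédei function `R_{n,a}` on `P¹(F_q)` has only
1- and 4-cycles and is not the identity. -/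
def IsFourCycleExponent (m n : ℕ) : Prop :=
  m ∣ n ^ 4 - 1 ∧ Nat.gcd (n ^ 2 - 1) m = Nat.gcd (n - 1) m ∧ ¬ m ∣ n - 1

lemma Nat.pow_four_sub_one_eq_mul (n : ℕ) : n ^ 4 - 1 = (n ^ 2 + 1) * (n ^ 2 - 1) := by
  rw [← Nat.sq_sub_sq, one_pow, ← pow_mul]

lemma Nat.sq_sub_one_eq_mul_s15 (n : ℕ) : n ^ 2 - 1 = (n + 1) * (n - 1) := by
  rw [← Nat.sq_sub_sq, one_pow]

lemma Nat.Prime.eq_two_of_dvd_add_one_of_dvd_sub_one {p a : ℕ} (hp : p.Prime)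
    (h₁ : p ∣ a + 1) (h₂ : p ∣ a - 1) : p = 2 := by
  obtain rfl | ha := a.eq_zero_or_pos
  · exact absurd (Nat.dvd_one.mp h₁) hp.ne_one
  have hp2 : p ∣ 2 := (Nat.dvd_add_right h₂).mp (by rwa [show a - 1 + 2 = a + 1 by omega])
  exact (Nat.prime_dvd_prime_iff_eq hp Nat.prime_two).mp hp2

lemma Nat.Prime.mod_four_eq_one_of_dvd_sq_add_one {p n : ℕ} (hp : p.Prime) (hp2 : p ≠ 2)
    (h : p ∣ n ^ 2 + 1) : p % 4 = 1 := by
  have := Fact.mk hp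
  have hn : (n : ZMod p) ^ 2 = -1 :=
    eq_neg_of_add_eq_zero_left (by exact_mod_cast (ZMod.natCast_eq_zero_iff _ _).mpr h)
  have h3 := ZMod.mod_four_ne_three_of_sq_eq_neg_one hn
  have h2 := hp.eq_one_or_self_of_dvd 2
  omega

lemma Nat.exists_sq_add_one_dvd_prime_pow {ℓ : ℕ} (hℓ : ℓ.Prime) (h4 : ℓ % 4 = 1) (e : ℕ) :
    ∃ y : ℕ, ℓ ^ e ∣ y ^ 2 + 1 := by
  have := Fact.mk hℓ
  obtain ⟨x, hx⟩ := ZMod.exists_sq_eq_neg_one_iff.mpr (by omega : ℓ % 4 ≠ 3)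
  cases e with
  | zero => exact ⟨0, by simp⟩
  | succ k =>
  -- `y ≡ x (mod ℓ)` by Fermat, and raising `x⁴ ≡ 1 (mod ℓ)` to the power `ℓ ^ k` lifts it to
  -- `y⁴ ≡ 1 (mod ℓ ^ (k + 1))`; since `ℓ ∤ y² - 1`, all of `ℓ ^ (k + 1)` divides `y² + 1`.
  set y : ℕ := x.val ^ ℓ ^ k
  have hy : ℓ ∣ y ^ 2 + 1 := by
    rw [← ZMod.natCast_eq_zero_iff]
    push_cast [y]
    rw [ZMod.natCast_zmod_val, ZMod.pow_card_pow, sq, ← hx, neg_add_cancel]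
  have hy0 : y ≠ 0 := by
    intro h
    rw [h, zero_pow two_ne_zero, zero_add, Nat.dvd_one] at hy
    exact hℓ.ne_one hy
  have hy4 : ℓ ^ (k + 1) ∣ y ^ 4 - 1 := by
    have hx4 : (ℓ : ℤ) ∣ (x.val : ℤ) ^ 4 - 1 := by
      rw [← ZMod.intCast_zmod_eq_zero_iff_dvd]
      push_cast
      rw [ZMod.natCast_zmod_val, show x ^ 4 = (x * x) ^ 2 by ring, ← hx]
      ring
    refine (Nat.modEq_iff_dvd' (Nat.one_le_pow _ _ (Nat.pos_of_ne_zero hy0))).mp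
      (Nat.modEq_iff_dvd.mpr ?_)
    have hlift := dvd_sub_pow_of_dvd_sub hx4 k
    rw [one_pow, ← pow_mul, mul_comm, pow_mul] at hlift
    exact_mod_cast hlift
  have hcop : Nat.Coprime (ℓ ^ (k + 1)) (y ^ 2 - 1) :=
    Nat.Coprime.pow_left _ ((Nat.Prime.coprime_iff_not_dvd hℓ).mpr fun h =>
      by have := hℓ.eq_two_of_dvd_add_one_of_dvd_sub_one hy h; omega)
  exact ⟨y, hcop.dvd_of_dvd_mul_right (Nat.pow_four_sub_one_eq_mul y ▸ hy4)⟩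

lemma IsFourCycleExponent.pos {m n : ℕ} (h : IsFourCycleExponent m n) : 0 < n :=
  Nat.pos_of_ne_zero fun hn => h.2.2 (by simp [hn])

lemma IsFourCycleExponent.exists_prime_mod_four_eq_one_dvd {m n : ℕ}
    (h : IsFourCycleExponent m n) : ∃ ℓ, ℓ.Prime ∧ ℓ % 4 = 1 ∧ ℓ ∣ m := by
  obtain ⟨h4, hgcd, hn⟩ := h
  have hn1 : n - 1 ≠ 0 := fun h => hn (h ▸ dvd_zero m)
  have hm : m ≠ 0 := by
    rintro rfl
    have : n ^ 4 ≤ 1 := by have := Nat.eq_zero_of_zero_dvd h4; omega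
    have := Nat.pow_le_one_iff (by norm_num : 4 ≠ 0) |>.mp this
    omega
  obtain ⟨p, hp⟩ : ∃ p, (n - 1).factorization p < m.factorization p := by
    by_contra! h
    exact hn ((Nat.factorization_le_iff_dvd hm hn1).mp (Finsupp.le_def.mpr h))
  have hpp : p.Prime := by
    by_contra h
    simp [Nat.factorization_eq_zero_of_not_prime _ h] at hp
  set v := (n - 1).factorization p
  have hpm : p ^ (v + 1) ∣ m := (hpp.pow_dvd_iff_le_factorization hm).mpr hp
  have hpn1 : ¬ p ^ (v + 1) ∣ n - 1 := by
    rw [hpp.pow_dvd_iff_le_factorization hn1]; omega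
  have hpsq : ¬ p ^ (v + 1) ∣ n ^ 2 - 1 := fun h =>
    hpn1 ((Nat.dvd_gcd h hpm).trans (hgcd ▸ Nat.gcd_dvd_left _ _))
  have hpn2 : p ∣ n ^ 2 + 1 := by
    by_contra h
    refine hpsq (((hpp.coprime_iff_not_dvd.mpr h).pow_left _).dvd_of_dvd_mul_left ?_)
    exact Nat.pow_four_sub_one_eq_mul n ▸ hpm.trans h4
  have hp2 : p ≠ 2 := by
    rintro rfl
    have hn2 : ¬ 2 ∣ n := fun h => by
      have := (Nat.dvd_add_right (dvd_pow h two_ne_zero)).mp hpn2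
      omega
    refine hpsq ?_
    rw [Nat.sq_sub_one_eq_mul_s15, pow_succ']
    exact mul_dvd_mul (by omega) (Nat.ordProj_dvd _ _)
  exact ⟨p, hpp, hpp.mod_four_eq_one_of_dvd_sq_add_one hp2 hpn2,
    (dvd_pow_self p v.succ_ne_zero).trans hpm⟩

lemma exists_isFourCycleExponent_of_prime_dvd {m ℓ : ℕ} (hm : m ≠ 0) (hℓ : ℓ.Prime)
    (h4 : ℓ % 4 = 1) (hℓm : ℓ ∣ m) : ∃ n, IsFourCycleExponent m n := by
  set L := ordProj[ℓ] m
  set M := ordCompl[ℓ] m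
  have hLM : L * M = m := Nat.ordProj_mul_ordCompl_eq_self m ℓ
  have hcop : L.Coprime M := (Nat.coprime_ordCompl hℓ hm).pow_left _
  have hℓL : ℓ ∣ L := dvd_pow_self ℓ (hℓ.factorization_pos_of_dvd hm hℓm).ne'
  obtain ⟨y, hy⟩ := Nat.exists_sq_add_one_dvd_prime_pow hℓ h4 (m.factorization ℓ)
  obtain ⟨n, hnL, hnM⟩ := Nat.chineseRemainder hcop y 1
  have hL : L ∣ n ^ 2 + 1 :=
    Nat.modEq_zero_iff_dvd.mp (((hnL.pow 2).add_right 1).trans (Nat.modEq_zero_iff_dvd.mpr hy))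
  have hM : M ∣ n - 1 := Nat.dvd_of_mod_eq_zero (Nat.sub_mod_eq_zero_of_mod_eq hnM)
  have hℓn : ¬ ℓ ∣ n ^ 2 - 1 := fun h => by
    have := hℓ.eq_two_of_dvd_add_one_of_dvd_sub_one (hℓL.trans hL) h
    omega
  have hn1 : n - 1 ∣ n ^ 2 - 1 := Dvd.intro_left _ (Nat.sq_sub_one_eq_mul_s15 n).symm
  have hcopL : Nat.Coprime (n ^ 2 - 1) L := ((hℓ.coprime_iff_not_dvd.mpr hℓn).pow_left _).symm
  refine ⟨n, ?_, ?_, fun h => hℓn ((hℓm.trans h).trans hn1)⟩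
  · rw [← hLM, Nat.pow_four_sub_one_eq_mul]
    exact hcop.mul_dvd_of_dvd_of_dvd (hL.mul_right _) ((hM.trans hn1).mul_left _)
  · rw [← hLM, Nat.Coprime.gcd_mul _ hcop, Nat.Coprime.gcd_mul _ hcop, hcopL,
      hcopL.coprime_dvd_left hn1, Nat.gcd_eq_right (hM.trans hn1), Nat.gcd_eq_right hM]

/-- Proposition 3.13: existence of a Rédei permutation over P¹(F_q) with
1- and 4-cycles. -/
theorem stmt_15 (q : ℕ) (hq : ∃ p' j : ℕ, p'.Prime ∧ Odd p' ∧ 0 < j ∧ q = p' ^ j) :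
    (∃ χ : ℤ, (χ = 1 ∨ χ = -1) ∧ ∃ m n : ℕ, (m : ℤ) = (q : ℤ) - χ ∧ 0 < n ∧
        m ∣ n ^ 4 - 1 ∧ Nat.gcd (n ^ 2 - 1) m = Nat.gcd (n - 1) m ∧
        ¬ m ∣ n - 1) ↔
      (∃ ℓ : ℕ, ℓ.Prime ∧ ℓ % 4 = 1 ∧ (ℓ ∣ q - 1 ∨ ℓ ∣ q + 1)) := by
  obtain ⟨p, j, hp, -, hj, rfl⟩ := hq
  have hq : 2 ≤ p ^ j := hp.two_le.trans (Nat.le_self_pow hj.ne' p)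
  constructor
  · rintro ⟨χ, hχ, m, n, hm, -, hn⟩
    obtain ⟨ℓ, hℓ, h4, hℓm⟩ := IsFourCycleExponent.exists_prime_mod_four_eq_one_dvd hn
    refine ⟨ℓ, hℓ, h4, ?_⟩
    rcases hχ with rfl | rfl
    · exact .inl (by rwa [show m = p ^ j - 1 by omega] at hℓm)
    · exact .inr (by rwa [show m = p ^ j + 1 by omega] at hℓm)
  · rintro ⟨ℓ, hℓ, h4, h | h⟩
    · obtain ⟨n, hn⟩ := exists_isFourCycleExponent_of_prime_dvd (by omega) hℓ h4 h
      exact ⟨1, .inl rfl, _, n, by omega, hn.pos, hn⟩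
    · obtain ⟨n, hn⟩ := exists_isFourCycleExponent_of_prime_dvd (by omega) hℓ h4 h
      exact ⟨-1, .inr rfl, _, n, by omega, hn.pos, hn⟩
end

section
/- Let d be a proper divisor of m with ν₂(d) = ν₂(m), ν_ℓ(d) = ν_ℓ(m) for every prime ℓ with ℓ ≡ 3 (mod 4), and gcd(d, m/d) = 1. Let u be the number of primes ℓ such that ℓ ≡ 1 (mod 4), ℓ divides m, and ℓ does not divide d. Then the number of integers n with 1 ≤ n ≤ m such that m divides n⁴ − 1, gcd(n² − 1, m) = d, and gcd(n − 1, m) = d equals 2^u. -/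
/-!
Write `m = d * m'`. As `d` carries the whole `2`-part of `m` and the whole `ℓ`-part for every
`ℓ ≡ 3 (mod 4)`, and `gcd d m' = 1`, the cofactor `m'` is odd and all its prime factors are
`≡ 1 (mod 4)`. The three conditions on `n` then amount to `n ≡ 1 (mod d)` and `n² ≡ -1 (mod m')`,
so by the Chinese remainder theorem the count is the number of square roots of `-1` in `ZMod m'`.
That number is multiplicative in `m'`, and equals `2` at each prime power `p ^ e`, because
`(ZMod (p ^ e))ˣ` is cyclic of order divisible by `4`.
-/

open Finset

theorem Nat.card_subtype_and_of_equiv_prod {α β γ : Type*} (e : α ≃ β × γ) {p : α → Prop}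
    {r : β → Prop} {s : γ → Prop} (h : ∀ x, p x ↔ r (e x).1 ∧ s (e x).2) :
    Nat.card {x // p x} = Nat.card {b // r b} * Nat.card {c // s c} := by
  rw [← Nat.card_prod, Nat.card_congr ((e.subtypeEquiv h).trans Equiv.subtypeProdEquivProd)]

/-- In a cyclic group of order divisible by `4`, the square roots of the element of order `2`
are exactly the `φ 4 = 2` elements of order `4`. -/
theorem IsCyclic.card_sq_eq_of_orderOf_eq_two {G : Type*} [Group G] [Fintype G] [IsCyclic G]
    (hG : 4 ∣ Fintype.card G) {z : G} (hz : orderOf z = 2) :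
    Nat.card {g : G // g ^ 2 = z} = 2 := by
  classical
  have eq_of_orderOf_eq_two : ∀ w : G, orderOf w = 2 → w = z := by
    have hcard := IsCyclic.card_orderOf_eq_totient (Dvd.dvd.trans (by norm_num) hG : 2 ∣ _)
    intro w hw
    exact Finset.card_le_one.mp (by rw [hcard]; rfl) w (by simpa using hw) z (by simpa using hz)
  have sq_eq_iff : ∀ g : G, g ^ 2 = z ↔ orderOf g = 4 := by
    intro g
    constructor
    · intro hg
      refine orderOf_eq_prime_pow (p := 2) (n := 1) ?_ ?_
      · rw [pow_one, hg]
        exact fun h => by simp [h] at hz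
      · rw [show 2 ^ (1 + 1) = 2 * 2 by rfl, pow_mul, hg, ← hz, pow_orderOf_eq_one]
    · intro hg
      exact eq_of_orderOf_eq_two _ (by rw [orderOf_pow_of_dvd two_ne_zero (by omega), hg])
  rw [Nat.card_eq_fintype_card, Fintype.card_subtype, filter_congr fun g _ => sq_eq_iff g,
    IsCyclic.card_orderOf_eq_totient hG]
  rfl

theorem Units.card_sq_eq_neg_one (R : Type*) [CommRing R] :
    Nat.card {u : Rˣ // u ^ 2 = -1} = Nat.card {y : R // y ^ 2 = -1} :=
  Nat.card_congr
    { toFun u := ⟨u.1, by rw [← Units.val_pow_eq_pow_val, u.2, Units.val_neg, Units.val_one]⟩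
      invFun y := ⟨Units.mkOfMulEqOne y (-y) (by linear_combination -y.2), Units.ext <| by
        simp [Units.val_pow_eq_pow_val, y.2]⟩
      left_inv u := by ext; rfl
      right_inv y := rfl }

namespace ZMod

theorem card_sq_eq_neg_one_prime_pow {p e : ℕ} (hp : p.Prime) (hp4 : p % 4 = 1) (he : e ≠ 0) :
    Nat.card {y : ZMod (p ^ e) // y ^ 2 = -1} = 2 := by
  have hpe : 2 < p ^ e := lt_of_lt_of_le (by have := hp.two_le; omega) (Nat.le_self_pow he p)
  have : Fact (1 < p ^ e) := ⟨by omega⟩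
  have := isCyclic_units_of_prime_pow p hp (by omega) e
  rw [← Units.card_sq_eq_neg_one]
  apply IsCyclic.card_sq_eq_of_orderOf_eq_two
  · rw [card_units_eq_totient, Nat.totient_prime_pow hp (Nat.pos_of_ne_zero he)]
    exact dvd_mul_of_dvd_right (Nat.dvd_of_mod_eq_zero (by omega)) _
  · rw [← orderOf_units, Units.val_neg, Units.val_one, orderOf_neg_one, ringChar_zmod_n,
      if_neg hpe.ne']

theorem card_sq_eq_neg_one_mul {a b : ℕ} (h : a.Coprime b) :
    Nat.card {y : ZMod (a * b) // y ^ 2 = -1} =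
      Nat.card {y : ZMod a // y ^ 2 = -1} * Nat.card {y : ZMod b // y ^ 2 = -1} := by
  let e := chineseRemainder h
  refine Nat.card_subtype_and_of_equiv_prod e.toEquiv fun y => ?_
  rw [← e.injective.eq_iff, map_pow, map_neg, map_one, Prod.ext_iff]
  rfl

theorem card_sq_eq_neg_one {N : ℕ} (hN : N ≠ 0) (h : ∀ p ∈ N.primeFactors, p % 4 = 1) :
    Nat.card {y : ZMod N // y ^ 2 = -1} = 2 ^ N.primeFactors.card := by
  have card_one : Nat.card {y : ZMod 1 // y ^ 2 = -1} = 1 :=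
    Nat.card_eq_one_iff_unique.mpr ⟨inferInstance, ⟨⟨0, Subsingleton.elim _ _⟩⟩⟩
  rw [Nat.multiplicative_factorization (fun N => Nat.card {y : ZMod N // y ^ 2 = -1})
    (fun _ _ => card_sq_eq_neg_one_mul) card_one hN, Finsupp.prod]
  calc ∏ p ∈ N.factorization.support, Nat.card {y : ZMod (p ^ N.factorization p) // y ^ 2 = -1}
      = ∏ p ∈ N.factorization.support, 2 := by
        refine prod_congr rfl fun p hp => ?_
        rw [Nat.support_factorization] at hp
        exact card_sq_eq_neg_one_prime_pow (Nat.prime_of_mem_primeFactors hp) (h p hp)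
          (Finsupp.mem_support_iff.mp (Nat.support_factorization N ▸ hp))
    _ = 2 ^ N.primeFactors.card := by rw [prod_const, Nat.support_factorization]

theorem card_filter_Icc_natCast (m : ℕ) [NeZero m] (P : ZMod m → Prop) [DecidablePred P] :
    #{n ∈ Icc 1 m | P ((n : ℕ) : ZMod m)} = Nat.card {x // P x} := by
  rw [Nat.card_eq_fintype_card, Fintype.card_subtype]
  -- `x ↦ (x - 1).val + 1` sends `0` to `m`, so it inverts the cast on `[1, m]` rather than `[0, m)`.
  apply card_nbij' (fun n : ℕ => (n : ZMod m)) (fun x => (x - 1).val + 1)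
  · intro n hn
    simp_all
  · intro x hx
    have := (x - 1).val_lt
    simp_all
  · intro n hn
    simp only [coe_filter, mem_Icc, Set.mem_ofPred_eq] at hn
    change ((n : ZMod m) - 1).val + 1 = n
    rw [← Nat.cast_one, ← Nat.cast_sub hn.1.1, val_natCast, Nat.mod_eq_of_lt (by omega)]
    omega
  · intro x _
    simp

end ZMod

theorem card_filter_Icc_dvd_sub_one_and_dvd_sq_add_one {d m' : ℕ} (hd : d ≠ 0) (hm' : m' ≠ 0)
    (h : d.Coprime m') :
    #{n ∈ Icc 1 (d * m') | d ∣ n - 1 ∧ m' ∣ n ^ 2 + 1} = Nat.card {y : ZMod m' // y ^ 2 = -1} := by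
  have : NeZero (d * m') := ⟨mul_ne_zero hd hm'⟩
  let e := ZMod.chineseRemainder h
  have conditions_iff : ∀ n ∈ Icc 1 (d * m'),
      d ∣ n - 1 ∧ m' ∣ n ^ 2 + 1 ↔ (e n).1 = 1 ∧ (e n).2 ^ 2 = -1 := by
    intro n hn
    rw [map_natCast, Prod.fst_natCast, Prod.snd_natCast, ← ZMod.natCast_eq_zero_iff,
      ← ZMod.natCast_eq_zero_iff, Nat.cast_sub (mem_Icc.mp hn).1, sub_eq_zero,
      eq_neg_iff_add_eq_zero]
    push_cast
    rfl
  rw [filter_congr conditions_iff,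
    ZMod.card_filter_Icc_natCast _ fun x => (e x).1 = 1 ∧ (e x).2 ^ 2 = -1,
    Nat.card_subtype_and_of_equiv_prod e.toEquiv (p := fun x => (e x).1 = 1 ∧ (e x).2 ^ 2 = -1)
      (r := (· = 1)) (s := (· ^ 2 = -1)) fun _ => Iff.rfl]
  simp

theorem Nat.gcd_mul_eq_of_dvd_of_coprime {k d m : ℕ} (hd : d ∣ k) (hk : k.Coprime m)
    (h : d.Coprime m) : k.gcd (d * m) = d := by
  rw [Nat.Coprime.gcd_mul k h, Nat.gcd_eq_right hd, hk.gcd_eq_one, mul_one]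

theorem dvd_pow_four_sub_one_and_gcd_eq_iff {d m' n : ℕ} (h : d.Coprime m') (hm' : Odd m')
    (hn : 1 ≤ n) :
    (d * m' ∣ n ^ 4 - 1 ∧ (n ^ 2 - 1).gcd (d * m') = d ∧ (n - 1).gcd (d * m') = d) ↔
      d ∣ n - 1 ∧ m' ∣ n ^ 2 + 1 := by
  have hfac : n ^ 4 - 1 = (n ^ 2 + 1) * (n ^ 2 - 1) := by
    rw [← Nat.sq_sub_sq, one_pow, ← pow_mul]
  have hsub : n - 1 ∣ n ^ 2 - 1 := by simpa only [one_pow] using Nat.sub_dvd_pow_sub_pow n 1 2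
  constructor
  · rintro ⟨h4, h2, h1⟩
    refine ⟨h1 ▸ Nat.gcd_dvd_left _ _, ?_⟩
    have hg : (n ^ 2 - 1).gcd m' ∣ d := h2 ▸ Nat.gcd_dvd_gcd_of_dvd_right _ (dvd_mul_left m' d)
    have hcop : (n ^ 2 - 1).Coprime m' :=
      Nat.dvd_one.mp ((Nat.dvd_gcd hg (Nat.gcd_dvd_right _ _)).trans h.gcd_eq_one.dvd)
    exact hcop.symm.dvd_of_dvd_mul_right (hfac ▸ (dvd_mul_left m' d).trans h4)
  · rintro ⟨h1, h2⟩
    have hcop2 : (n ^ 2 - 1).Coprime m' := by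
      have hgcd_dvd_two : (n ^ 2 - 1).gcd m' ∣ 2 := by
        have := Nat.dvd_sub ((Nat.gcd_dvd_right _ _).trans h2) (Nat.gcd_dvd_left (n ^ 2 - 1) m')
        rwa [show n ^ 2 + 1 - (n ^ 2 - 1) = 2 by have := Nat.one_le_pow 2 n hn; omega] at this
      rcases (Nat.dvd_prime Nat.prime_two).mp hgcd_dvd_two with hg | hg
      · exact hg
      · exact absurd (hm'.of_dvd_nat (Nat.gcd_dvd_right _ _)) (by rw [hg]; decide)
    refine ⟨h.mul_dvd_of_dvd_of_dvd ?_ ?_, Nat.gcd_mul_eq_of_dvd_of_coprime (h1.trans hsub) hcop2 h,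
      Nat.gcd_mul_eq_of_dvd_of_coprime h1 (hcop2.coprime_dvd_left hsub) h⟩
    · exact hfac ▸ (h1.trans hsub).trans (dvd_mul_left _ _)
    · exact hfac ▸ h2.trans (dvd_mul_right _ _)

theorem not_dvd_of_padicValNat_eq {ℓ d m : ℕ} [Fact ℓ.Prime] (h0 : d * m ≠ 0)
    (h : padicValNat ℓ d = padicValNat ℓ (d * m)) : ¬ ℓ ∣ m := by
  intro hdvd
  have := one_le_padicValNat_of_dvd (right_ne_zero_of_mul h0) hdvd
  rw [padicValNat.mul (left_ne_zero_of_mul h0) (right_ne_zero_of_mul h0)] at h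
  omega

theorem mod_four_eq_one_of_mem_primeFactors {d m ℓ : ℕ} (h0 : d * m ≠ 0)
    (h2 : padicValNat 2 d = padicValNat 2 (d * m))
    (h3 : ∀ ℓ : ℕ, ℓ.Prime → ℓ % 4 = 3 → padicValNat ℓ d = padicValNat ℓ (d * m))
    (hℓ : ℓ ∈ m.primeFactors) : ℓ % 4 = 1 := by
  have hℓp := Nat.prime_of_mem_primeFactors hℓ
  have hℓm := Nat.dvd_of_mem_primeFactors hℓ
  have : Fact ℓ.Prime := ⟨hℓp⟩
  have hℓ2 : ℓ ≠ 2 := by rintro rfl; exact not_dvd_of_padicValNat_eq h0 h2 hℓm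
  have hℓ3 : ℓ % 4 ≠ 3 := fun h => not_dvd_of_padicValNat_eq h0 (h3 ℓ hℓp h) hℓm
  have := Nat.odd_iff.mp (hℓp.odd_of_ne_two hℓ2)
  omega

theorem Nat.filter_primeFactors_mul_not_dvd {a b : ℕ} (h : a.Coprime b) :
    {ℓ ∈ (a * b).primeFactors | ¬ ℓ ∣ a} = b.primeFactors := by
  ext ℓ
  simp only [mem_filter, Nat.mem_primeFactors]
  constructor
  · rintro ⟨⟨hℓ, hdvd, h0⟩, hℓa⟩
    exact ⟨hℓ, (hℓ.dvd_mul.mp hdvd).resolve_left hℓa, right_ne_zero_of_mul h0⟩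
  · rintro ⟨hℓ, hℓb, hb⟩
    have hℓa : ¬ ℓ ∣ a := fun hℓa => hℓ.one_lt.ne' (Nat.eq_one_of_dvd_coprimes h hℓa hℓb)
    exact ⟨⟨hℓ, hℓb.mul_left a, mul_ne_zero (by rintro rfl; exact hℓa (dvd_zero ℓ)) hb⟩, hℓa⟩

theorem stmt_16_general (q : ℕ) (hq : ∃ p' j : ℕ, p'.Prime ∧ Odd p' ∧ 0 < j ∧ q = p' ^ j)
    (χ : ℤ) (hχ : χ = 1 ∨ χ = -1) (m : ℕ) (hm : (m : ℤ) = (q : ℤ) - χ)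
    (d : ℕ) (hdm : d ∣ m)
    (h2 : padicValNat 2 d = padicValNat 2 m)
    (h3 : ∀ ℓ : ℕ, ℓ.Prime → ℓ % 4 = 3 → padicValNat ℓ d = padicValNat ℓ m)
    (hgcd : Nat.gcd d (m / d) = 1)
    (u : ℕ)
    (hu : u = (m.primeFactors.filter (fun ℓ => ℓ % 4 = 1 ∧ ¬ ℓ ∣ d)).card) :
    ((Finset.Icc 1 m).filter
      (fun n => m ∣ n ^ 4 - 1 ∧ Nat.gcd (n ^ 2 - 1) m = d ∧
        Nat.gcd (n - 1) m = d)).card = 2 ^ u := by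
  have hm0 : m ≠ 0 := by
    obtain ⟨p, j, hp, -, hj, rfl⟩ := hq
    have := Nat.one_lt_pow hj.ne' hp.one_lt
    rcases hχ with rfl | rfl <;> omega
  obtain ⟨m', rfl⟩ := hdm
  have hd0 := left_ne_zero_of_mul hm0
  have hm'0 := right_ne_zero_of_mul hm0
  rw [Nat.mul_div_cancel_left _ (Nat.pos_of_ne_zero hd0)] at hgcd
  have hmod4 : ∀ ℓ ∈ m'.primeFactors, ℓ % 4 = 1 :=
    fun ℓ hℓ => mod_four_eq_one_of_mem_primeFactors hm0 h2 h3 hℓ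
  have hodd : Odd m' := Nat.odd_iff.mpr <| by
    by_contra h
    have := hmod4 2 (Nat.mem_primeFactors.mpr ⟨Nat.prime_two, by omega, hm'0⟩)
    omega
  have hu' : u = m'.primeFactors.card := by
    rw [hu, ← filter_filter, filter_comm,
      Nat.filter_primeFactors_mul_not_dvd hgcd, filter_true_of_mem hmod4]
  rw [filter_congr fun n hn =>
      dvd_pow_four_sub_one_and_gcd_eq_iff hgcd hodd (mem_Icc.mp hn).1,
    card_filter_Icc_dvd_sub_one_and_dvd_sq_add_one hd0 hm'0 hgcd,
    ZMod.card_sq_eq_neg_one hm'0 hmod4, hu']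

/-- Proposition 3.14: the number of Rédei permutations with d + χ + 1 fixed
points and 4-cycles for a fixed parameter a. -/
theorem stmt_16 (q : ℕ) (hq : ∃ p' j : ℕ, p'.Prime ∧ Odd p' ∧ 0 < j ∧ q = p' ^ j)
    (χ : ℤ) (hχ : χ = 1 ∨ χ = -1) (m : ℕ) (hm : (m : ℤ) = (q : ℤ) - χ)
    (d : ℕ) (hdm : d ∣ m) (hdne : d ≠ m)
    (h2 : padicValNat 2 d = padicValNat 2 m)
    (h3 : ∀ ℓ : ℕ, ℓ.Prime → ℓ % 4 = 3 → padicValNat ℓ d = padicValNat ℓ m)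
    (hgcd : Nat.gcd d (m / d) = 1)
    (u : ℕ)
    (hu : u = (m.primeFactors.filter (fun ℓ => ℓ % 4 = 1 ∧ ¬ ℓ ∣ d)).card) :
    ((Finset.Icc 1 m).filter
      (fun n => m ∣ n ^ 4 - 1 ∧ Nat.gcd (n ^ 2 - 1) m = d ∧
        Nat.gcd (n - 1) m = d)).card = 2 ^ u :=
  stmt_16_general q hq χ hχ m hm d hdm h2 h3 hgcd u hu
end

section
/- Let r be the number of primes ℓ such that ℓ ≡ 1 (mod 4) and ℓ divides m. Then the number of integers n with 2 ≤ n ≤ m such that m divides n⁴ − 1 and gcd(n² − 1, m) = gcd(n − 1, m) equals 3^r − 1. -/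
/-!
Write `x` for the residue of `n` in `ZMod m`. Since `x - 1 ∣ x ^ 2 - 1` always, and
`gcd(a, m)` generates the same ideal of `ZMod m` as `a`, the gcd condition says exactly
`x ^ 2 - 1 ∣ x - 1`. The set of `x` with `x ^ 4 = 1` and `x ^ 2 - 1 ∣ x - 1` is compatible with
the Chinese remainder theorem, so its size is multiplicative in `m`; and `ZMod (p ^ e)` is a
local ring. For odd `p`, `2` is a unit, which forces `x + 1` to be a unit unless `x = -1`; so
the set consists of the fourth roots of unity other than `-1`, and there are `gcd(φ(p ^ e), 4) - 1`
of them because the unit group is cyclic: `3` if `p ≡ 1 [MOD 4]` and `1` otherwise.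
For `p = 2`, `x + 1` is never a unit, so writing `x - 1 = (x ^ 2 - 1) c` gives
`(x - 1) (1 - (x + 1) c) = 0` with a unit second factor, hence `x = 1`.
Hence there are `3 ^ r` residues, and `n = 1` is the one excluded by `2 ≤ n`.
-/

lemma Nat.gcd_eq_gcd_iff_gcd_dvd {a b m : ℕ} (hba : b ∣ a) :
    a.gcd m = b.gcd m ↔ a.gcd m ∣ b :=
  ⟨fun h => h ▸ Nat.gcd_dvd_left b m, fun h =>
    Nat.dvd_antisymm (Nat.dvd_gcd h (Nat.gcd_dvd_right a m)) (Nat.gcd_dvd_gcd_of_dvd_left m hba)⟩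

namespace ZMod

lemma natCast_dvd_natCast_iff_gcd_dvd {m a b : ℕ} :
    (a : ZMod m) ∣ (b : ZMod m) ↔ a.gcd m ∣ b := by
  constructor
  · rintro ⟨c, hc⟩
    have hm : (m : ℤ) ∣ a * (cast c : ℤ) - b := by
      rw [← intCast_eq_intCast_iff_dvd_sub]
      push_cast [intCast_zmod_cast]
      exact hc
    have hga : ((a.gcd m : ℕ) : ℤ) ∣ a * (cast c : ℤ) :=
      (Int.natCast_dvd_natCast.mpr (Nat.gcd_dvd_left a m)).mul_right _
    have hgm : ((a.gcd m : ℕ) : ℤ) ∣ m := Int.natCast_dvd_natCast.mpr (Nat.gcd_dvd_right a m)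
    exact Int.natCast_dvd_natCast.mp (by simpa using dvd_sub hga (hgm.trans hm))
  · rintro ⟨k, rfl⟩
    have bezout := congrArg (Int.cast : ℤ → ZMod m) (Nat.gcd_eq_gcd_ab a m)
    push_cast [natCast_self] at bezout
    exact ⟨(a.gcdA m : ZMod m) * k, by push_cast; rw [bezout]; ring⟩

lemma val_natCast_sub_one {m n : ℕ} (hn : n ≠ 0) (hnm : n ≤ m) :
    ((n : ZMod m) - 1).val = n - 1 := by
  rw [← Nat.cast_one, ← Nat.cast_sub (Nat.one_le_iff_ne_zero.mpr hn), val_natCast,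
    Nat.mod_eq_of_lt (by omega)]

lemma card_filter_Icc_two_natCast_mem {m : ℕ} [NeZero m] (S : Set (ZMod m))
    [DecidablePred (· ∈ S)] (h1 : 1 ∈ S) :
    ((Finset.Icc 2 m).filter fun n : ℕ => (n : ZMod m) ∈ S).card = Nat.card S - 1 := by
  rw [Nat.card_coe_set_eq, ← Set.ncard_sdiff_singleton_of_mem h1, ← Set.ncard_coe_finset]
  refine Set.ncard_congr (fun n _ => (n : ZMod m)) ?_ ?_ ?_
  · intro n hn
    simp only [Finset.coe_filter, Finset.mem_Icc, Set.mem_ofPred_eq] at hn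
    refine ⟨hn.2, fun h => ?_⟩
    have := val_natCast_sub_one (by omega) hn.1.2
    rw [Set.mem_singleton_iff.mp h, sub_self, val_zero] at this
    omega
  · intro a b ha hb hab
    simp only [Finset.coe_filter, Finset.mem_Icc, Set.mem_ofPred_eq] at ha hb
    have := val_natCast_sub_one (m := m) (n := a) (by omega) ha.1.2
    rw [hab, val_natCast_sub_one (by omega) hb.1.2] at this
    omega
  · rintro x ⟨hx, hx1⟩
    have hcast : (((x - 1).val + 1 : ℕ) : ZMod m) = x := by
      push_cast [natCast_zmod_val]
      ring
    refine ⟨(x - 1).val + 1, ?_, hcast⟩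
    have hval : (x - 1).val ≠ 0 := fun h => hx1 (sub_eq_zero.mp ((val_eq_zero _).mp h))
    simp only [Finset.coe_filter, Finset.mem_Icc, Set.mem_ofPred_eq, hcast]
    exact ⟨⟨by omega, val_lt (x - 1)⟩, hx⟩

variable {p e : ℕ}

lemma isUnit_prime_pow_iff (hp : p.Prime) (he : e ≠ 0) (x : ZMod (p ^ e)) :
    IsUnit x ↔ castHom (dvd_pow_self p he) (ZMod p) x ≠ 0 := by
  have : NeZero (p ^ e) := ⟨pow_ne_zero _ hp.ne_zero⟩
  rw [← natCast_zmod_val x, isUnit_iff_coprime, map_natCast, Ne, natCast_eq_zero_iff,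
    Nat.coprime_pow_right_iff (Nat.pos_of_ne_zero he), Nat.coprime_comm, hp.coprime_iff_not_dvd]

lemma isLocalRing_prime_pow (hp : p.Prime) (he : e ≠ 0) : IsLocalRing (ZMod (p ^ e)) := by
  have : Fact (1 < p ^ e) := ⟨Nat.one_lt_pow he hp.one_lt⟩
  refine IsLocalRing.of_isUnit_or_isUnit_of_isUnit_add fun a b hab => ?_
  simp only [isUnit_prime_pow_iff hp he, map_add] at hab ⊢
  by_contra! h
  exact hab (by rw [h.1, h.2, add_zero])

lemma card_setOf_pow_eq_one_prime_pow (hp : p.Prime) (hp2 : p ≠ 2) {n : ℕ} (hn : n ≠ 0) :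
    Nat.card {x : ZMod (p ^ e) | x ^ n = 1} = (Nat.totient (p ^ e)).gcd n := by
  have : NeZero (p ^ e) := ⟨pow_ne_zero _ hp.ne_zero⟩
  have := isCyclic_units_of_prime_pow p hp hp2 e
  rw [← card_units_eq_totient, ← Nat.card_eq_fintype_card, ← IsCyclic.card_powMonoidHom_ker]
  exact Nat.card_congr
    { toFun := fun x => ⟨Units.ofPowEqOne x.1 n x.2 hn, Units.pow_ofPowEqOne _ _⟩
      invFun := fun u => ⟨u.1, show (u.1 : ZMod (p ^ e)) ^ n = 1 by
        rw [← Units.val_pow_eq_pow_val]; exact congrArg Units.val (MonoidHom.mem_ker.mp u.2)⟩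
      left_inv := fun x => rfl
      right_inv := fun u => by ext; rfl }

end ZMod

/-- The residues of the `n` for which the Rédei permutation `R_{n,a}` has only 1- and 4-cycles. -/
def oneFourSet (R : Type*) [CommRing R] : Set R := {x | x ^ 4 = 1 ∧ x ^ 2 - 1 ∣ x - 1}

section CommRing

variable {R S : Type*} [CommRing R] [CommRing S]

lemma one_mem_oneFourSet : (1 : R) ∈ oneFourSet R := by
  simp [oneFourSet]

lemma mem_oneFourSet_prod {x : R × S} :
    x ∈ oneFourSet (R × S) ↔ x.1 ∈ oneFourSet R ∧ x.2 ∈ oneFourSet S := by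
  simp only [oneFourSet, Set.mem_ofPred_eq, Prod.ext_iff, prod_dvd_iff, Prod.pow_fst,
    Prod.pow_snd, Prod.fst_one, Prod.snd_one, Prod.fst_sub, Prod.snd_sub]
  tauto

lemma card_oneFourSet_prod :
    Nat.card (oneFourSet (R × S)) = Nat.card (oneFourSet R) * Nat.card (oneFourSet S) := by
  rw [← Nat.card_prod]
  exact Nat.card_congr <|
    (Equiv.subtypeEquivRight fun _ => mem_oneFourSet_prod).trans Equiv.subtypeProdEquivProd

lemma card_oneFourSet_congr (e : R ≃+* S) :
    Nat.card (oneFourSet R) = Nat.card (oneFourSet S) :=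
  Nat.card_congr <| e.toEquiv.subtypeEquiv fun x => by
    simp only [oneFourSet, Set.mem_ofPred_eq, RingEquiv.toEquiv_eq_coe, EquivLike.coe_coe]
    rw [← map_pow, ← map_one e, e.injective.eq_iff, ← map_dvd_iff e, map_sub, map_sub,
      map_pow, map_one]

end CommRing

section IsLocalRing

variable {R : Type*} [CommRing R] [IsLocalRing R] {x : R}

lemma eq_one_of_mem_oneFourSet_of_not_isUnit (hx : x ∈ oneFourSet R) (h : ¬IsUnit (x + 1)) :
    x = 1 := by
  obtain ⟨c, hc⟩ := hx.2
  have hu : IsUnit (1 - (x + 1) * c) :=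
    IsLocalRing.isUnit_one_sub_self_of_mem_nonunits _ fun h' => h (isUnit_of_mul_isUnit_left h')
  have : (x - 1) * (1 - (x + 1) * c) = 0 := by linear_combination hc
  exact sub_eq_zero.mp ((hu.mul_left_eq_zero).mp this)

lemma isUnit_add_one_of_pow_four_eq_one (h2 : IsUnit (2 : R)) (hx : x ^ 4 = 1) (hx1 : x ≠ -1) :
    IsUnit (x + 1) := by
  by_contra h
  have h1x : IsUnit (1 - x) :=
    (IsLocalRing.isUnit_or_isUnit_of_isUnit_add
      (by rwa [show x + 1 + (1 - x) = 2 by ring])).resolve_left h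
  have hx2 : IsUnit (x ^ 2 + 1) :=
    (IsLocalRing.isUnit_or_isUnit_of_isUnit_add (b := (1 - x) * (x + 1))
      (by rwa [show x ^ 2 + 1 + (1 - x) * (x + 1) = 2 by ring])).resolve_right
      fun h' => h (isUnit_of_mul_isUnit_right h')
  have : (x + 1) * ((1 - x) * (x ^ 2 + 1)) = 0 := by linear_combination -hx
  exact hx1 (eq_neg_of_add_eq_zero_left (((h1x.mul hx2).mul_left_eq_zero).mp this))

lemma oneFourSet_eq_of_isUnit_two (h2 : IsUnit (2 : R)) :
    oneFourSet R = {x | x ^ 4 = 1} \ {-1} := by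
  ext x
  simp only [oneFourSet, Set.mem_sdiff, Set.mem_ofPred_eq, Set.mem_singleton_iff]
  refine ⟨fun ⟨hx, hdvd⟩ => ⟨hx, ?_⟩, fun ⟨hx, hx1⟩ => ⟨hx, ?_⟩⟩
  · rintro rfl
    have : (2 : R) = 0 := by
      rw [show (-1 : R) ^ 2 - 1 = 0 by ring, zero_dvd_iff] at hdvd
      linear_combination -hdvd
    exact not_isUnit_zero (this ▸ h2)
  · rw [show x ^ 2 - 1 = (x - 1) * (x + 1) by ring]
    exact (isUnit_add_one_of_pow_four_eq_one h2 hx hx1).mul_right_dvd.mpr dvd_rfl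

end IsLocalRing

section PrimePow

variable {p e : ℕ}

lemma oneFourSet_zmod_two_pow (he : e ≠ 0) : oneFourSet (ZMod (2 ^ e)) = {1} := by
  have := ZMod.isLocalRing_prime_pow Nat.prime_two he
  refine Set.eq_singleton_iff_unique_mem.mpr ⟨one_mem_oneFourSet, fun x hx => ?_⟩
  refine eq_one_of_mem_oneFourSet_of_not_isUnit hx ?_
  have hx : IsUnit x := IsUnit.of_pow_eq_one hx.1 four_ne_zero
  rw [ZMod.isUnit_prime_pow_iff Nat.prime_two he] at hx ⊢
  rw [not_not, map_add, map_one]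
  generalize ZMod.castHom _ (ZMod 2) x = y at hx
  revert y
  decide

lemma card_oneFourSet_zmod_odd_prime_pow (hp : p.Prime) (hp2 : p ≠ 2) (he : e ≠ 0) :
    Nat.card (oneFourSet (ZMod (p ^ e))) = if p % 4 = 1 then 3 else 1 := by
  have : NeZero (p ^ e) := ⟨pow_ne_zero _ hp.ne_zero⟩
  have := ZMod.isLocalRing_prime_pow hp he
  have h2 : IsUnit (2 : ZMod (p ^ e)) := by
    rw [← Nat.cast_ofNat, ZMod.isUnit_prime_iff_not_dvd Nat.prime_two]
    exact fun h => hp2 ((Nat.prime_dvd_prime_iff_eq Nat.prime_two hp).mp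
      (Nat.prime_two.dvd_of_dvd_pow h)).symm
  have hcop : Nat.Coprime (p ^ (e - 1)) 4 :=
    ((Nat.coprime_primes hp Nat.prime_two).mpr hp2).pow (e - 1) 2
  have hodd : p % 2 = 1 := Nat.odd_iff.mp (hp.odd_of_ne_two hp2)
  rw [oneFourSet_eq_of_isUnit_two h2, Nat.card_coe_set_eq,
    Set.ncard_sdiff_singleton_of_mem (by norm_num), ← Nat.card_coe_set_eq,
    ZMod.card_setOf_pow_eq_one_prime_pow hp hp2 four_ne_zero,
    Nat.totient_prime_pow hp (Nat.pos_of_ne_zero he), hcop.gcd_mul_left_cancel, Nat.gcd_comm,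
    Nat.gcd_rec]
  rcases (by omega : (p - 1) % 4 = 0 ∨ (p - 1) % 4 = 2) with h | h
  · rw [h, if_pos (by omega)]; rfl
  · rw [h, if_neg (by omega)]; rfl

lemma card_oneFourSet_zmod_prime_pow (hp : p.Prime) (he : e ≠ 0) :
    Nat.card (oneFourSet (ZMod (p ^ e))) = if p % 4 = 1 then 3 else 1 := by
  rcases eq_or_ne p 2 with rfl | hp2
  · simp [oneFourSet_zmod_two_pow he]
  · exact card_oneFourSet_zmod_odd_prime_pow hp hp2 he

end PrimePow

lemma card_oneFourSet_zmod {m : ℕ} (hm : m ≠ 0) :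
    Nat.card (oneFourSet (ZMod m)) = 3 ^ (m.primeFactors.filter (fun ℓ => ℓ % 4 = 1)).card := by
  rw [Nat.multiplicative_factorization (fun n => Nat.card (oneFourSet (ZMod n)))
    (fun a b hab => (card_oneFourSet_congr (ZMod.chineseRemainder hab)).trans
      card_oneFourSet_prod)
    (Nat.card_eq_one_iff_unique.mpr ⟨inferInstance, ⟨⟨1, one_mem_oneFourSet⟩⟩⟩) hm,
    Finsupp.prod, Nat.support_factorization]
  rw [Finset.prod_congr rfl fun p hp =>
      card_oneFourSet_zmod_prime_pow (Nat.prime_of_mem_primeFactors hp)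
        (Finsupp.mem_support_iff.mp (by rwa [Nat.support_factorization])),
    Finset.prod_ite, Finset.prod_const, Finset.prod_const_one, mul_one]

lemma natCast_mem_oneFourSet_iff {m n : ℕ} (hn : n ≠ 0) :
    (n : ZMod m) ∈ oneFourSet (ZMod m) ↔
      m ∣ n ^ 4 - 1 ∧ (n ^ 2 - 1).gcd m = (n - 1).gcd m := by
  have cast_pow_sub_one (k : ℕ) : ((n ^ k - 1 : ℕ) : ZMod m) = (n : ZMod m) ^ k - 1 := by
    rw [Nat.cast_sub (Nat.one_le_pow _ _ (Nat.pos_of_ne_zero hn)), Nat.cast_pow, Nat.cast_one]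
  have cast_sub_one : ((n - 1 : ℕ) : ZMod m) = (n : ZMod m) - 1 := by
    simpa only [pow_one] using cast_pow_sub_one 1
  have hdvd : n - 1 ∣ n ^ 2 - 1 := by simpa only [one_pow] using Nat.sub_dvd_pow_sub_pow n 1 2
  rw [Nat.gcd_eq_gcd_iff_gcd_dvd hdvd, ← ZMod.natCast_dvd_natCast_iff_gcd_dvd,
    ← ZMod.natCast_eq_zero_iff, cast_pow_sub_one, cast_pow_sub_one, cast_sub_one, sub_eq_zero]
  rfl

theorem stmt_17_general (m : ℕ)
    (r : ℕ) (hr : r = (m.primeFactors.filter (fun ℓ => ℓ % 4 = 1)).card) :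
    ((Finset.Icc 2 m).filter
      (fun n => m ∣ n ^ 4 - 1 ∧ Nat.gcd (n ^ 2 - 1) m = Nat.gcd (n - 1) m)).card =
      3 ^ r - 1 := by
  rcases eq_or_ne m 0 with rfl | hm
  · simp [hr]
  have : NeZero m := ⟨hm⟩
  classical
  rw [hr, ← card_oneFourSet_zmod hm,
    ← ZMod.card_filter_Icc_two_natCast_mem _ one_mem_oneFourSet]
  refine congrArg Finset.card (Finset.filter_congr fun n hn => ?_)
  exact (natCast_mem_oneFourSet_iff (zero_lt_two.trans_le (Finset.mem_Icc.mp hn).1).ne').symm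

/-- Proposition 3.15: the total number of Rédei permutations with 1- and
4-cycles for a fixed parameter a. -/
theorem stmt_17 (q : ℕ) (hq : ∃ p' j : ℕ, p'.Prime ∧ Odd p' ∧ 0 < j ∧ q = p' ^ j)
    (χ : ℤ) (hχ : χ = 1 ∨ χ = -1) (m : ℕ) (hm : (m : ℤ) = (q : ℤ) - χ)
    (r : ℕ) (hr : r = (m.primeFactors.filter (fun ℓ => ℓ % 4 = 1)).card) :
    ((Finset.Icc 2 m).filter
      (fun n => m ∣ n ^ 4 - 1 ∧ Nat.gcd (n ^ 2 - 1) m = Nat.gcd (n - 1) m)).card =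
      3 ^ r - 1 :=
  stmt_17_general m r hr
end

section
/- Let d be a proper divisor of m and let n be a positive integer such that m divides n³ − 1 and gcd(n − 1, m) = d. Then m divides (n²)³ − 1 and gcd(n² − 1, m) = d. -/
theorem Nat.gcd_pow_sub_one_eq_of_dvd {m n j k : ℕ} (h : m ∣ n ^ k - 1) :
    Nat.gcd (n ^ j - 1) m = Nat.gcd (n ^ Nat.gcd j k - 1) m := by
  rw [← Nat.pow_sub_one_gcd_pow_sub_one, Nat.gcd_assoc, Nat.gcd_eq_right h]

theorem stmt_19_general (m : ℕ) (d : ℕ) (n : ℕ) (hdvd : m ∣ n ^ 3 - 1)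
    (hgcd : Nat.gcd (n - 1) m = d) :
    m ∣ (n ^ 2) ^ 3 - 1 ∧ Nat.gcd (n ^ 2 - 1) m = d := by
  constructor
  · rw [← pow_mul]
    exact hdvd.trans (Nat.pow_sub_one_dvd_pow_sub_one n (dvd_mul_left 3 2))
  · rw [Nat.gcd_pow_sub_one_eq_of_dvd hdvd]
    simpa using hgcd

/-- Corollary 4.3: if R_{n,a} has d + χ + 1 fixed points and 3-cycles, then
so does R_{n²,a}. -/
theorem stmt_19 (q : ℕ) (hq : ∃ p j : ℕ, p.Prime ∧ Odd p ∧ 0 < j ∧ q = p ^ j)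
    (χ : ℤ) (hχ : χ = 1 ∨ χ = -1) (m : ℕ) (hm : (m : ℤ) = (q : ℤ) - χ)
    (d : ℕ) (hdm : d ∣ m) (hdne : d ≠ m)
    (n : ℕ) (hn : 0 < n) (hdvd : m ∣ n ^ 3 - 1) (hgcd : Nat.gcd (n - 1) m = d) :
    m ∣ (n ^ 2) ^ 3 - 1 ∧ Nat.gcd (n ^ 2 - 1) m = d :=
  stmt_19_general m d n hdvd hgcd
end
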